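/- arXiv:2111.06833 — 6 statements merged into one kernel-verified Lean document; each statement's English description precedes it below -/
import Mathlib

section
/- Privacy of the balls-into-bins mechanism: let m, s, k, n be positive integers with s ≤ m, let p ∈ [0,1], let 0 < ε ≤ 3 and 0 < δ < 1, and assume k + n·p ≥ (32·ln(2/δ)/ε²)·(m/s). Then for any two distinct subsets S, S' of [m] with |S| = |S'| = s, and any set Y of multisets over [m], Pr[M^BIB(S) ∈ Y] ≤ e^ε · Pr[M^BIB(S') ∈ Y] + δ. -/
open scoped ENNReal

noncomputable def uniformBin (m : ℕ) (hm : 0 < m) : PMF (Fin m) :=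
  PMF.uniformOfFinset Finset.univ
    (Finset.univ_nonempty_iff.mpr (Fin.pos_iff_nonempty.mp hm))

/-- Sum of `n` independent copies of a random multiset. -/
noncomputable def repeatMSum {α : Type*} (ν : PMF (Multiset α)) : ℕ → PMF (Multiset α)
  | 0 => PMF.pure 0
  | n + 1 => ν.bind fun s => (repeatMSum ν n).map (s + ·)

/-- With probability `p`, one draw from `ν`; otherwise nothing. -/
noncomputable def trialM {α : Type*} (ν : PMF α) (p : ℝ≥0∞) (hp : p ≤ 1) : PMF (Multiset α) :=
  (PMF.ofFintype (fun b => cond b p (1 - p)) (by simp [hp])).bind fun b => if b then ν.map (fun x => {x}) else PMF.pure 0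

/-- The balls-into-bins mechanism. -/
noncomputable def MBIB (m k n : ℕ) (hm : 0 < m) (p : ℝ≥0∞) (hp : p ≤ 1)
    (S : Finset (Fin m)) (hS : S.Nonempty) : PMF (Multiset (Fin m)) :=
  (PMF.uniformOfFinset S hS).bind fun x =>
    (repeatMSum ((uniformBin m hm).map (fun y => {y})) k).bind fun A =>
      (repeatMSum (trialM (uniformBin m hm) p hp) n).map fun C => {x} + A + C

/-!
The `k + n` noise balls (`bibNoise`) form an exchangeable random multiset (`IsExchangeable`).
Hence the output law at `y`, which is `s⁻¹ ∑_{x ∈ S} Pr[noise = y - x]`, equals the number of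
balls of `y` lying in `S` times a factor that does not depend on `S`: the likelihood ratio of `S`
against `S'` at `y` is the ratio of the numbers of balls of `y` in `S` and in `S'`. The number of
noise balls in a set of `s` bins has a generating function dominated by that of a Poisson law of
mean `μ = (k + n p) s / m`, so Chernoff bounds keep the two counts in
`[(1 - ε/4) μ, 1 + (1 + ε/3) μ]` outside an event of probability `δ`, and on that range the
ratio is at most `exp ε`.
-/

lemma ENNReal.toReal_le_mul_add_of_le {a b : ℝ≥0∞} {c d : ℝ} (hb : b ≠ ⊤) (hc : 0 ≤ c)
    (hd : 0 ≤ d) (h : a ≤ ENNReal.ofReal c * b + ENNReal.ofReal d) :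
    a.toReal ≤ c * b.toReal + d := by
  have hfin : ENNReal.ofReal c * b ≠ ⊤ := ENNReal.mul_ne_top ENNReal.ofReal_ne_top hb
  refine (ENNReal.toReal_mono (ENNReal.add_ne_top.mpr ⟨hfin, ENNReal.ofReal_ne_top⟩) h).trans_eq ?_
  rw [ENNReal.toReal_add hfin ENNReal.ofReal_ne_top, ENNReal.toReal_mul,
    ENNReal.toReal_ofReal hc, ENNReal.toReal_ofReal hd]

namespace PMF

variable {α β : Type*}

lemma tsum_bind_mul (p : PMF α) (F : α → PMF β) (f : β → ℝ≥0∞) :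
    ∑' b, p.bind F b * f b = ∑' a, p a * ∑' b, F a b * f b := by
  simp only [bind_apply, ← ENNReal.tsum_mul_right, ← ENNReal.tsum_mul_left, mul_assoc]
  exact ENNReal.tsum_comm

lemma tsum_pure_mul (a : α) (f : α → ℝ≥0∞) : ∑' b, pure a b * f b = f a := by
  simp [pure_apply]

lemma tsum_map_mul (p : PMF α) (g : α → β) (f : β → ℝ≥0∞) :
    ∑' b, p.map g b * f b = ∑' a, p a * f (g a) := by
  simp only [← bind_pure_comp, tsum_bind_mul, Function.comp_apply, tsum_pure_mul]

lemma toOuterMeasure_mul_le_tsum (p : PMF α) {s : Set α} {c : ℝ≥0∞} {f : α → ℝ≥0∞}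
    (h : ∀ a ∈ s, c ≤ f a) : p.toOuterMeasure s * c ≤ ∑' a, p a * f a := by
  rw [toOuterMeasure_apply, ← ENNReal.tsum_mul_right]
  refine ENNReal.tsum_le_tsum fun a => ?_
  by_cases ha : a ∈ s
  · simpa [ha] using mul_le_mul_right (h a ha) (p a)
  · simp [ha]

lemma toOuterMeasure_bind_le (p : PMF α) (F : α → PMF β) {s : Set β} {c : ℝ≥0∞}
    (h : ∀ a, (F a).toOuterMeasure s ≤ c) : (p.bind F).toOuterMeasure s ≤ c := by
  rw [toOuterMeasure_bind_apply]
  calc ∑' a, p a * (F a).toOuterMeasure s ≤ ∑' a, p a * c :=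
        ENNReal.tsum_le_tsum fun a => mul_le_mul_right (h a) _
    _ = c := by rw [ENNReal.tsum_mul_right, tsum_coe, one_mul]

lemma toOuterMeasure_le_mul_add_of_forall_le (p q : PMF α) (s G : Set α) {c : ℝ≥0∞}
    (h : ∀ a ∈ G, p a ≤ c * q a) :
    p.toOuterMeasure s ≤ c * q.toOuterMeasure s + p.toOuterMeasure Gᶜ := by
  refine (MeasureTheory.measure_le_inter_add_sdiff _ s G).trans
    (add_le_add ?_ (MeasureTheory.measure_mono fun a ha => ha.2))
  rw [toOuterMeasure_apply, toOuterMeasure_apply, ← ENNReal.tsum_mul_left]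
  refine ENNReal.tsum_le_tsum fun a => ?_
  by_cases ha : a ∈ s ∩ G
  · simpa [Set.indicator_of_mem ha, Set.indicator_of_mem ha.1] using h a ha.2
  · simp [Set.indicator_of_notMem ha]

section Convolution

variable {M : Type*} [AddMonoid M]

noncomputable def conv (ν ρ : PMF M) : PMF M :=
  ν.bind fun a => ρ.map (a + ·)

lemma pure_zero_conv (ρ : PMF M) : (pure 0).conv ρ = ρ := by
  rw [conv, pure_bind]
  simp only [zero_add]
  exact map_id ρ

lemma conv_assoc (ν ρ τ : PMF M) : (ν.conv ρ).conv τ = ν.conv (ρ.conv τ) := by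
  simp only [conv, bind_bind, map_bind, bind_map, map_comp]
  simp only [Function.comp_def, add_assoc]

noncomputable def pgf (ρ : PMF M) (f : M →+ ℕ) (r : ℝ≥0∞) : ℝ≥0∞ :=
  ∑' a, ρ a * r ^ f a

variable (f : M →+ ℕ) (r : ℝ≥0∞)

lemma pgf_pure_zero : (pure (0 : M)).pgf f r = 1 := by
  simp [pgf]

lemma pgf_conv (ν ρ : PMF M) : (ν.conv ρ).pgf f r = ν.pgf f r * ρ.pgf f r := by
  simp only [pgf, conv, tsum_bind_mul, tsum_map_mul, map_add, pow_add, mul_left_comm _ (r ^ f _),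
    ENNReal.tsum_mul_left, ← ENNReal.tsum_mul_right, mul_assoc]

lemma toOuterMeasure_le_of_pgf_le (ρ : PMF M) {θ B K : ℝ}
    (h : ρ.pgf f (ENNReal.ofReal (Real.exp θ)) ≤ ENNReal.ofReal (Real.exp K)) :
    ρ.toOuterMeasure {a | B ≤ θ * f a} ≤ ENNReal.ofReal (Real.exp (K - B)) := by
  have hB : ENNReal.ofReal (Real.exp B) ≠ 0 := by simpa using Real.exp_pos B
  have markov := ρ.toOuterMeasure_mul_le_tsum (c := ENNReal.ofReal (Real.exp B))
    (f := fun a => ENNReal.ofReal (Real.exp θ) ^ f a) (s := {a | B ≤ θ * f a}) fun a ha => by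
      rw [← ENNReal.ofReal_pow (Real.exp_pos θ).le, ← Real.exp_nat_mul]
      exact ENNReal.ofReal_le_ofReal (Real.exp_le_exp.mpr (by rw [mul_comm]; exact ha))
  rw [Real.exp_sub, ENNReal.ofReal_div_of_pos (Real.exp_pos B)]
  exact ENNReal.le_div_iff_mul_le (Or.inl hB) (Or.inl ENNReal.ofReal_ne_top) |>.mpr
    (markov.trans h)

end Convolution

end PMF

lemma repeatMSum_succ {α : Type*} (ν : PMF (Multiset α)) (n : ℕ) :
    repeatMSum ν (n + 1) = ν.conv (repeatMSum ν n) := rfl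

lemma pgf_repeatMSum {α : Type*} (ν : PMF (Multiset α)) (f : Multiset α →+ ℕ) (r : ℝ≥0∞)
    (n : ℕ) : (repeatMSum ν n).pgf f r = ν.pgf f r ^ n := by
  induction n with
  | zero => rw [pow_zero]; exact PMF.pgf_pure_zero f r
  | succ n ih => rw [repeatMSum_succ, PMF.pgf_conv, ih, pow_succ']

section Occupancy

variable {α : Type*} [DecidableEq α]

lemma Multiset.sum_count_eq_countP (S : Finset α) (y : Multiset α) :
    ∑ x ∈ S, y.count x = y.countP (· ∈ S) := by
  induction y using Multiset.induction_on with
  | empty => simp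
  | cons a y ih =>
    simp [Multiset.count_cons, Finset.sum_add_distrib, ih, Multiset.countP_cons]

lemma PMF.map_cons_apply (ρ : PMF (Multiset α)) (x : α) (y : Multiset α) :
    ρ.map (x ::ₘ ·) y = if x ∈ y then ρ (y.erase x) else 0 := by
  rw [PMF.map_apply]
  split_ifs with hx
  · refine (tsum_eq_single (y.erase x) fun z hz => if_neg ?_).trans
      (if_pos (Multiset.cons_erase hx).symm)
    rintro rfl
    exact hz (Multiset.erase_cons_head x z).symm
  · exact ENNReal.tsum_eq_zero.mpr fun z => if_neg (by rintro rfl; exact hx (by simp))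

/-- Equivalently, `ρ y * ∏ x ∈ y.toFinset, (y.count x)!` depends only on `card y`; for finite `α`,
`ρ` is a mixture of multinomial laws with uniform cell probabilities. -/
def IsExchangeable (ρ : PMF (Multiset α)) : Prop :=
  ∀ (z : Multiset α) (x x' : α),
    ((z.count x : ℝ≥0∞) + 1) * ρ (x ::ₘ z) = ((z.count x' : ℝ≥0∞) + 1) * ρ (x' ::ₘ z)

lemma isExchangeable_pure_zero : IsExchangeable (PMF.pure (0 : Multiset α)) := by
  intro z x x'
  simp [PMF.pure_apply]

lemma IsExchangeable.of_apply_eq_add {ρ σ τ : PMF (Multiset α)} (hρ : IsExchangeable ρ)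
    (hσ : IsExchangeable σ) (a b : ℝ≥0∞) (h : ∀ y, τ y = a * ρ y + b * σ y) :
    IsExchangeable τ := by
  intro z x x'
  simp only [h, mul_add, mul_left_comm _ a, mul_left_comm _ b, hρ z x x', hσ z x x']

lemma count_add_one_mul_sum_erase [Fintype α] (f : Multiset α → ℝ≥0∞) (x : α)
    (z : Multiset α) :
    ((z.count x : ℝ≥0∞) + 1) * ∑ u, (if u ∈ x ::ₘ z then f ((x ::ₘ z).erase u) else 0) =
      f z + ∑ u, if u ∈ z then ((z.erase u).count x + 1 : ℝ≥0∞) * f (x ::ₘ z.erase u) else 0 := by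
  set rest := ∑ u ∈ Finset.univ.erase x, if u ∈ z then f (x ::ₘ z.erase u) else 0
  have hleft : ∑ u, (if u ∈ x ::ₘ z then f ((x ::ₘ z).erase u) else 0) = f z + rest := by
    rw [← Finset.add_sum_erase _ _ (Finset.mem_univ x), if_pos (Multiset.mem_cons_self x z),
      Multiset.erase_cons_head]
    refine congrArg _ (Finset.sum_congr rfl fun u hu => ?_)
    have hux := Finset.ne_of_mem_erase hu
    simp only [Multiset.mem_cons, hux, false_or, Multiset.erase_cons_tail z (Ne.symm hux)]
  have hright : (∑ u, if u ∈ z then ((z.erase u).count x + 1 : ℝ≥0∞) * f (x ::ₘ z.erase u)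
      else 0) = z.count x * f z + (z.count x + 1) * rest := by
    rw [← Finset.add_sum_erase _ _ (Finset.mem_univ x), Finset.mul_sum]
    congr 1
    · split_ifs with hx
      · have hcount := Multiset.count_cons_self x (z.erase x)
        rw [Multiset.cons_erase hx] at hcount
        rw [Multiset.cons_erase hx, hcount, Nat.cast_add, Nat.cast_one]
      · simp [Multiset.count_eq_zero_of_notMem hx]
    · refine Finset.sum_congr rfl fun u hu => ?_
      rw [Multiset.count_erase_of_ne (Finset.ne_of_mem_erase hu).symm]
      split_ifs <;> simp
  rw [hleft, hright]
  ring

lemma IsExchangeable.of_apply_eq_mul_sum [Fintype α] {ρ σ : PMF (Multiset α)}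
    (hρ : IsExchangeable ρ) (c : ℝ≥0∞)
    (h : ∀ y, σ y = c * ∑ u, if u ∈ y then ρ (y.erase u) else 0) : IsExchangeable σ := by
  intro z x x'
  rw [h, h, mul_left_comm, mul_left_comm _ c, count_add_one_mul_sum_erase,
    count_add_one_mul_sum_erase]
  congr 2
  refine Finset.sum_congr rfl fun u _ => ?_
  split_ifs with hu
  · exact hρ _ x x'
  · rfl

lemma IsExchangeable.count_mul_erase_comm {ρ : PMF (Multiset α)} (hρ : IsExchangeable ρ)
    (x x' : α) (y : Multiset α) :
    (y.count x' : ℝ≥0∞) * (if x ∈ y then ρ (y.erase x) else 0) =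
      y.count x * (if x' ∈ y then ρ (y.erase x') else 0) := by
  by_cases hxx : x = x'
  · rw [hxx]
  by_cases hx : x ∈ y
  · by_cases hx' : x' ∈ y
    · -- both sides are `ρ` at `y` with one `x` and one `x'` removed, weighted as in `hρ`
      set z := (y.erase x).erase x'
      have hx'z : x' ::ₘ z = y.erase x :=
        Multiset.cons_erase ((Multiset.mem_erase_of_ne (Ne.symm hxx)).mpr hx')
      have hxz : x ::ₘ z = y.erase x' := by
        rw [show z = (y.erase x').erase x from Multiset.erase_comm y x x']
        exact Multiset.cons_erase ((Multiset.mem_erase_of_ne hxx).mpr hx)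
      have hcx' : y.count x' = z.count x' + 1 := by
        rw [← Multiset.count_erase_of_ne (Ne.symm hxx) y, ← hx'z, Multiset.count_cons_self]
      have hcx : y.count x = z.count x + 1 := by
        rw [← Multiset.count_erase_of_ne hxx y, ← hxz, Multiset.count_cons_self]
      rw [if_pos hx, if_pos hx', hcx', hcx, ← hx'z, ← hxz]
      push_cast
      exact hρ z x' x
    · simp [hx']
  · simp [hx]

lemma PMF.map_singleton_conv_apply [Fintype α] (ν : PMF α) (ρ : PMF (Multiset α))
    (y : Multiset α) :
    (ν.map ({·})).conv ρ y = ∑ u, ν u * if u ∈ y then ρ (y.erase u) else 0 := by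
  simp only [PMF.conv, PMF.bind_map, PMF.bind_apply, tsum_fintype, Function.comp_apply,
    Multiset.singleton_add, PMF.map_cons_apply]

end Occupancy

section Trial

variable {α : Type*}

lemma PMF.trialM_conv_apply (ν : PMF α) (p : ℝ≥0∞) (hp : p ≤ 1) (ρ : PMF (Multiset α))
    (y : Multiset α) :
    (trialM ν p hp).conv ρ y = (1 - p) * ρ y + p * (ν.map ({·})).conv ρ y := by
  rw [PMF.conv, trialM, PMF.bind_bind, PMF.bind_apply, tsum_bool]
  simp only [PMF.ofFintype_apply, cond_false, cond_true, Bool.false_eq_true, if_false, if_true,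
    PMF.pure_bind, zero_add]
  rw [show (fun a : Multiset α => a) = id from rfl, PMF.map_id]
  rfl

lemma PMF.pgf_trialM (ν : PMF α) (p : ℝ≥0∞) (hp : p ≤ 1) (f : Multiset α →+ ℕ) (r : ℝ≥0∞) :
    (trialM ν p hp).pgf f r = (1 - p) + p * (ν.map ({·})).pgf f r := by
  rw [PMF.pgf, trialM, PMF.tsum_bind_mul, tsum_bool]
  simp only [PMF.ofFintype_apply, cond_false, cond_true, Bool.false_eq_true, if_false, if_true,
    PMF.tsum_pure_mul, map_zero, pow_zero, mul_one]
  rfl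

end Trial

section Mechanism

variable {m : ℕ} (hm : 0 < m)

lemma uniformBin_apply (u : Fin m) : uniformBin m hm u = (m : ℝ≥0∞)⁻¹ := by
  simp [uniformBin, PMF.uniformOfFinset_apply]

lemma pgf_map_singleton_uniformBin (S : Finset (Fin m)) {R : ℝ} (hR : 0 ≤ R) :
    ((uniformBin m hm).map ({·})).pgf (Multiset.countPAddMonoidHom (· ∈ S)) (ENNReal.ofReal R) =
      ENNReal.ofReal (1 + S.card / m * (R - 1)) := by
  have hterm : ∀ u, uniformBin m hm u * ENNReal.ofReal R ^ ({u} : Multiset (Fin m)).countP (· ∈ S)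
      = ENNReal.ofReal ((m : ℝ)⁻¹ * (1 + if u ∈ S then R - 1 else 0)) := fun u => by
    rw [uniformBin_apply, ENNReal.ofReal_mul (by positivity), ENNReal.ofReal_inv_of_pos
      (by positivity), ENNReal.ofReal_natCast, ← Multiset.cons_zero, Multiset.countP_cons,
      Multiset.countP_zero]
    split_ifs <;> simp
  rw [PMF.pgf, PMF.tsum_map_mul, tsum_fintype]
  simp only [Multiset.coe_countPAddMonoidHom, hterm]
  rw [← ENNReal.ofReal_sum_of_nonneg fun u _ =>
    mul_nonneg (by positivity) (by split_ifs <;> linarith)]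
  congr 1
  rw [← Finset.mul_sum, Finset.sum_add_distrib, Finset.sum_ite_mem, Finset.univ_inter]
  simp only [Finset.sum_const, Finset.card_univ, Fintype.card_fin, nsmul_eq_mul, mul_one]
  field_simp

lemma IsExchangeable.uniformBin_conv {ρ : PMF (Multiset (Fin m))} (hρ : IsExchangeable ρ) :
    IsExchangeable (((uniformBin m hm).map ({·})).conv ρ) :=
  hρ.of_apply_eq_mul_sum (m : ℝ≥0∞)⁻¹ fun y => by
    simp only [PMF.map_singleton_conv_apply, uniformBin_apply, Finset.mul_sum]

lemma IsExchangeable.trialM_uniformBin_conv {ρ : PMF (Multiset (Fin m))}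
    (hρ : IsExchangeable ρ) (p : ℝ≥0∞) (hp : p ≤ 1) :
    IsExchangeable ((trialM (uniformBin m hm) p hp).conv ρ) :=
  hρ.of_apply_eq_add (hρ.uniformBin_conv hm) _ _ (PMF.trialM_conv_apply _ p hp ρ)

noncomputable def bibNoise (m k n : ℕ) (hm : 0 < m) (p : ℝ≥0∞) (hp : p ≤ 1) :
    PMF (Multiset (Fin m)) :=
  (repeatMSum ((uniformBin m hm).map ({·})) k).conv (repeatMSum (trialM (uniformBin m hm) p hp) n)

lemma pgf_bibNoise_le (k n : ℕ) {p : ℝ} (hp0 : 0 ≤ p) (hp1 : p ≤ 1) (S : Finset (Fin m))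
    (θ : ℝ) :
    (bibNoise m k n hm (ENNReal.ofReal p) (ENNReal.ofReal_le_one.mpr hp1)).pgf
        (Multiset.countPAddMonoidHom (· ∈ S)) (ENNReal.ofReal (Real.exp θ)) ≤
      ENNReal.ofReal (Real.exp ((k + n * p) * (S.card / m) * (Real.exp θ - 1))) := by
  set q : ℝ := S.card / m * (Real.exp θ - 1)
  have hq : 0 ≤ 1 + q := by
    have : (S.card : ℝ) / m ≤ 1 := by
      rw [div_le_one (by positivity)]
      exact_mod_cast (Finset.card_le_univ S).trans_eq (Fintype.card_fin m)
    have : (0 : ℝ) ≤ S.card / m := by positivity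
    nlinarith [Real.exp_pos θ]
  have hpq : 0 ≤ 1 + p * q := by nlinarith [mul_le_mul_of_nonneg_left hq hp0]
  have htrial : 1 - ENNReal.ofReal p + ENNReal.ofReal p * ENNReal.ofReal (1 + q)
      = ENNReal.ofReal (1 + p * q) := by
    rw [← ENNReal.ofReal_one, ← ENNReal.ofReal_sub _ hp0, ← ENNReal.ofReal_mul hp0,
      ← ENNReal.ofReal_add (by linarith) (by positivity)]
    ring_nf
  rw [bibNoise, PMF.pgf_conv, pgf_repeatMSum, pgf_repeatMSum, PMF.pgf_trialM,
    pgf_map_singleton_uniformBin hm S (Real.exp_pos θ).le, htrial, ← ENNReal.ofReal_pow hq,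
    ← ENNReal.ofReal_pow hpq, ← ENNReal.ofReal_mul (by positivity)]
  refine ENNReal.ofReal_le_ofReal ?_
  calc (1 + q) ^ k * (1 + p * q) ^ n ≤ Real.exp q ^ k * Real.exp (p * q) ^ n := by
        gcongr <;> linarith [Real.add_one_le_exp q, Real.add_one_le_exp (p * q)]
    _ = Real.exp ((k + n * p) * (S.card / m) * (Real.exp θ - 1)) := by
        rw [← Real.exp_nat_mul, ← Real.exp_nat_mul, ← Real.exp_add]
        congr 1
        simp only [q]
        ring

variable (k n : ℕ) (p : ℝ≥0∞) (hp : p ≤ 1)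

lemma isExchangeable_bibNoise : IsExchangeable (bibNoise m k n hm p hp) := by
  induction k with
  | zero =>
    rw [bibNoise, show repeatMSum _ 0 = PMF.pure 0 from rfl, PMF.pure_zero_conv]
    induction n with
    | zero => exact isExchangeable_pure_zero
    | succ n ih => rw [repeatMSum_succ]; exact ih.trialM_uniformBin_conv hm p hp
  | succ k ih =>
    rw [bibNoise, repeatMSum_succ, PMF.conv_assoc]
    exact ih.uniformBin_conv hm

variable (S S' : Finset (Fin m)) (hS : S.Nonempty) (hS' : S'.Nonempty)

lemma MBIB_eq_bind :
    MBIB m k n hm p hp S hS =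
      (PMF.uniformOfFinset S hS).bind fun x => (bibNoise m k n hm p hp).map (x ::ₘ ·) := by
  simp only [MBIB, bibNoise, PMF.conv, PMF.map_bind, PMF.map_comp]
  congr! 5 with x A C
  simp [← Multiset.singleton_add, add_assoc]

lemma MBIB_apply (y : Multiset (Fin m)) :
    MBIB m k n hm p hp S hS y =
      (S.card : ℝ≥0∞)⁻¹ * ∑ x ∈ S, if x ∈ y then bibNoise m k n hm p hp (y.erase x) else 0 := by
  rw [MBIB_eq_bind, PMF.bind_apply, tsum_fintype, Finset.mul_sum,
    ← Finset.sum_subset (Finset.subset_univ S) fun x _ hx => by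
      rw [PMF.uniformOfFinset_apply_of_notMem hS hx, zero_mul]]
  refine Finset.sum_congr rfl fun x hx => ?_
  rw [PMF.uniformOfFinset_apply_of_mem hS hx, PMF.map_cons_apply]

lemma MBIB_apply_mul_countP_comm (hcard : S.card = S'.card) (y : Multiset (Fin m)) :
    MBIB m k n hm p hp S hS y * y.countP (· ∈ S') =
      MBIB m k n hm p hp S' hS' y * y.countP (· ∈ S) := by
  simp only [MBIB_apply, ← Multiset.sum_count_eq_countP, Nat.cast_sum, Finset.sum_mul_sum,
    hcard, mul_assoc]
  rw [Finset.sum_comm]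
  refine congrArg _ (Finset.sum_congr rfl fun x' _ => Finset.sum_congr rfl fun x _ => ?_)
  rw [mul_comm, (isExchangeable_bibNoise hm k n p hp).count_mul_erase_comm x x' y, mul_comm]

lemma MBIB_apply_le_mul (hcard : S.card = S'.card) {y : Multiset (Fin m)} {c : ℝ}
    (hpos : 0 < y.countP (· ∈ S')) (h : (y.countP (· ∈ S) : ℝ) ≤ c * y.countP (· ∈ S')) :
    MBIB m k n hm p hp S hS y ≤ ENNReal.ofReal c * MBIB m k n hm p hp S' hS' y := by
  have hc : 0 ≤ c :=
    nonneg_of_mul_nonneg_left ((Nat.cast_nonneg _).trans h) (by exact_mod_cast hpos)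
  have hcount : (y.countP (· ∈ S) : ℝ≥0∞) ≤ ENNReal.ofReal c * y.countP (· ∈ S') := by
    rw [← ENNReal.ofReal_natCast, ← ENNReal.ofReal_natCast, ← ENNReal.ofReal_mul hc]
    exact ENNReal.ofReal_le_ofReal h
  refine (ENNReal.mul_le_mul_iff_left (by exact_mod_cast hpos.ne')
    (ENNReal.natCast_ne_top _)).mp ?_
  calc MBIB m k n hm p hp S hS y * y.countP (· ∈ S')
      = MBIB m k n hm p hp S' hS' y * y.countP (· ∈ S) :=
        MBIB_apply_mul_countP_comm hm k n p hp S S' hS hS' hcard y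
    _ ≤ MBIB m k n hm p hp S' hS' y * (ENNReal.ofReal c * y.countP (· ∈ S')) := by gcongr
    _ = ENNReal.ofReal c * MBIB m k n hm p hp S' hS' y * y.countP (· ∈ S') := by ring

lemma MBIB_toOuterMeasure_compl_le (A B : ℝ) :
    (MBIB m k n hm p hp S hS).toOuterMeasure
        {y | (y.countP (· ∈ S) : ℝ) ≤ B + 1 ∧ A ≤ y.countP (· ∈ S')}ᶜ ≤
      (bibNoise m k n hm p hp).toOuterMeasure {a | B < a.countP (· ∈ S)} +
        (bibNoise m k n hm p hp).toOuterMeasure {a | (a.countP (· ∈ S') : ℝ) < A} := by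
  rw [MBIB_eq_bind]
  refine PMF.toOuterMeasure_bind_le _ _ fun x => ?_
  rw [PMF.toOuterMeasure_map_apply]
  refine (MeasureTheory.measure_mono fun a ha => ?_).trans (MeasureTheory.measure_union_le _ _)
  simp only [Set.mem_preimage, Set.mem_compl_iff, Set.mem_ofPred_eq, not_and_or, not_le,
    Multiset.countP_cons, Set.mem_union] at ha ⊢
  rcases ha with ha | ha
  · left; split_ifs at ha <;> push_cast at ha <;> linarith
  · right; split_ifs at ha <;> push_cast at ha <;> linarith

end Mechanism

lemma Real.exp_le_one_add_add_sq_of_le_one {x : ℝ} (h0 : 0 ≤ x) (h1 : x ≤ 1) :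
    Real.exp x ≤ 1 + x + 3 * x ^ 2 / 4 := by
  have h := Real.exp_bound' h0 h1 (n := 2) two_pos
  norm_num [Finset.sum_range_succ, Nat.factorial] at h
  linarith

lemma Real.exp_neg_le_one_sub_add_sq {x : ℝ} (hx : 0 ≤ x) :
    Real.exp (-x) ≤ 1 - x + x ^ 2 / 2 := by
  have hpos : 0 < 1 + x + x ^ 2 / 2 := by positivity
  rw [Real.exp_neg]
  calc (Real.exp x)⁻¹ ≤ (1 + x + x ^ 2 / 2)⁻¹ := inv_anti₀ hpos (Real.quadratic_le_exp_of_nonneg hx)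
    _ ≤ 1 - x + x ^ 2 / 2 := by
      -- `(1 + x + x ^ 2 / 2) * (1 - x + x ^ 2 / 2) = 1 + x ^ 4 / 4`
      rw [inv_le_iff_one_le_mul₀ hpos]
      nlinarith [sq_nonneg (x ^ 2)]

section Tails

variable {M : Type*} [AddMonoid M] (f : M →+ ℕ) {ρ : PMF M} {μ ε : ℝ}

lemma PMF.toOuterMeasure_upper_tail_le
    (hρ : ∀ θ, ρ.pgf f (ENNReal.ofReal (Real.exp θ)) ≤
      ENNReal.ofReal (Real.exp (μ * (Real.exp θ - 1))))
    (hμ : 0 ≤ μ) (hε0 : 0 ≤ ε) (hε3 : ε ≤ 3) :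
    ρ.toOuterMeasure {a | (1 + ε / 3) * μ < f a} ≤
      ENNReal.ofReal (Real.exp (-(μ * ε ^ 2 / 32))) := by
  refine (MeasureTheory.measure_mono fun a (ha : (1 + ε / 3) * μ < f a) => ?_).trans
    ((ρ.toOuterMeasure_le_of_pgf_le f (B := ε / 4 * ((1 + ε / 3) * μ)) (hρ (ε / 4))).trans ?_)
  · exact mul_le_mul_of_nonneg_left ha.le (by linarith)
  · refine ENNReal.ofReal_le_ofReal (Real.exp_le_exp.mpr ?_)
    have := Real.exp_le_one_add_add_sq_of_le_one (x := ε / 4) (by linarith) (by linarith)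
    nlinarith [mul_le_mul_of_nonneg_left this hμ, mul_nonneg hμ (sq_nonneg ε)]

lemma PMF.toOuterMeasure_lower_tail_le
    (hρ : ∀ θ, ρ.pgf f (ENNReal.ofReal (Real.exp θ)) ≤
      ENNReal.ofReal (Real.exp (μ * (Real.exp θ - 1))))
    (hμ : 0 ≤ μ) (hε0 : 0 ≤ ε) :
    ρ.toOuterMeasure {a | (f a : ℝ) < (1 - ε / 4) * μ} ≤
      ENNReal.ofReal (Real.exp (-(μ * ε ^ 2 / 32))) := by
  refine (MeasureTheory.measure_mono fun a (ha : (f a : ℝ) < (1 - ε / 4) * μ) => ?_).trans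
    ((ρ.toOuterMeasure_le_of_pgf_le f (B := -(ε / 4) * ((1 - ε / 4) * μ))
      (hρ (-(ε / 4)))).trans ?_)
  · exact mul_le_mul_of_nonpos_left ha.le (by linarith)
  · refine ENNReal.ofReal_le_ofReal (Real.exp_le_exp.mpr ?_)
    have := Real.exp_neg_le_one_sub_add_sq (x := ε / 4) (by linarith)
    nlinarith [mul_le_mul_of_nonneg_left this hμ]

end Tails

lemma one_add_mul_le_exp_mul {ε μ : ℝ} (hε0 : 0 < ε) (hε3 : ε ≤ 3) (hμ : 22 ≤ μ * ε ^ 2) :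
    1 + (1 + ε / 3) * μ ≤ Real.exp ε * ((1 - ε / 4) * μ) := by
  have hexp : 1 + ε + ε ^ 2 / 2 + ε ^ 3 / 6 ≤ Real.exp ε := by
    have h := Real.sum_le_exp_of_nonneg hε0.le 4
    norm_num [Finset.sum_range_succ, Nat.factorial] at h
    linarith
  have hμ0 : 0 < μ := by
    by_contra! h
    nlinarith [mul_nonpos_of_nonpos_of_nonneg h (sq_nonneg ε)]
  nlinarith [mul_le_mul_of_nonneg_right hexp (by nlinarith : (0 : ℝ) ≤ (1 - ε / 4) * μ),
    mul_nonneg (mul_nonneg hμ0.le (sq_nonneg ε)) (by linarith : (0 : ℝ) ≤ 3 - ε),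
    mul_nonneg hμ0.le (pow_nonneg hε0.le 3)]

lemma MBIB_toOuterMeasure_le_exp_mul_add {m : ℕ} (hm : 0 < m) (k n : ℕ) {p : ℝ} (hp0 : 0 ≤ p)
    (hp1 : p ≤ 1) (S S' : Finset (Fin m)) (hS : S.Nonempty) (hS' : S'.Nonempty)
    (hcard : S.card = S'.card) {ε : ℝ} (hε0 : 0 < ε) (hε3 : ε ≤ 3)
    (hμ : 22 ≤ (k + n * p) * (S.card / m) * ε ^ 2) (Y : Set (Multiset (Fin m))) :
    (MBIB m k n hm (ENNReal.ofReal p) (ENNReal.ofReal_le_one.mpr hp1) S hS).toOuterMeasure Y ≤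
      ENNReal.ofReal (Real.exp ε) * (MBIB m k n hm (ENNReal.ofReal p)
          (ENNReal.ofReal_le_one.mpr hp1) S' hS').toOuterMeasure Y +
        ENNReal.ofReal (2 * Real.exp (-((k + n * p) * (S.card / m) * ε ^ 2 / 32))) := by
  set μ : ℝ := (k + n * p) * (S.card / m)
  have hμ0 : 0 < μ := by
    by_contra! h
    nlinarith [mul_nonpos_of_nonpos_of_nonneg h (sq_nonneg ε)]
  have hpgf (T : Finset (Fin m)) (hT : T.card = S.card) (θ : ℝ) :
      (bibNoise m k n hm _ (ENNReal.ofReal_le_one.mpr hp1)).pgf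
        (Multiset.countPAddMonoidHom (· ∈ T)) (ENNReal.ofReal (Real.exp θ)) ≤
      ENNReal.ofReal (Real.exp (μ * (Real.exp θ - 1))) := by
    simpa only [hT] using pgf_bibNoise_le hm k n hp0 hp1 T θ
  refine (PMF.toOuterMeasure_le_mul_add_of_forall_le _ _ Y
    {y | (y.countP (· ∈ S) : ℝ) ≤ (1 + ε / 3) * μ + 1 ∧ (1 - ε / 4) * μ ≤ y.countP (· ∈ S')}
    fun y ⟨hyS, hyS'⟩ => ?_).trans (add_le_add le_rfl ?_)
  · have hlower : 0 < (1 - ε / 4) * μ := by nlinarith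
    refine MBIB_apply_le_mul hm k n _ _ S S' hS hS' hcard
      (by exact_mod_cast hlower.trans_le hyS') ?_
    calc (y.countP (· ∈ S) : ℝ) ≤ 1 + (1 + ε / 3) * μ := by linarith
      _ ≤ Real.exp ε * ((1 - ε / 4) * μ) := one_add_mul_le_exp_mul hε0 hε3 hμ
      _ ≤ Real.exp ε * y.countP (· ∈ S') := by gcongr
  calc _ ≤ _ := MBIB_toOuterMeasure_compl_le hm k n _ _ S S' hS ((1 - ε / 4) * μ) ((1 + ε / 3) * μ)
    _ ≤ ENNReal.ofReal (Real.exp (-(μ * ε ^ 2 / 32))) +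
          ENNReal.ofReal (Real.exp (-(μ * ε ^ 2 / 32))) := add_le_add
        (PMF.toOuterMeasure_upper_tail_le (Multiset.countPAddMonoidHom (· ∈ S)) (hpgf S rfl)
          hμ0.le hε0.le hε3)
        (PMF.toOuterMeasure_lower_tail_le (Multiset.countPAddMonoidHom (· ∈ S'))
          (hpgf S' hcard.symm) hμ0.le hε0.le)
    _ = _ := by rw [← ENNReal.ofReal_add (by positivity) (by positivity), two_mul]

theorem stmt0_general (m s k n : ℕ) (hm : 0 < m) (hs : 0 < s)
    (p : ℝ) (hp0 : 0 ≤ p) (hp1 : p ≤ 1)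
    (ε δ : ℝ) (hε0 : 0 < ε) (hε3 : ε ≤ 3) (hδ0 : 0 < δ) (hδ1 : δ < 1)
    (hnoise : (k : ℝ) + n * p ≥ 32 * Real.log (2 / δ) / ε ^ 2 * ((m : ℝ) / s))
    (S S' : Finset (Fin m)) (hScard : S.card = s) (hS'card : S'.card = s)
    (Y : Set (Multiset (Fin m))) :
    ((MBIB m k n hm (ENNReal.ofReal p) (ENNReal.ofReal_le_one.mpr hp1) S
        (Finset.card_pos.mp (hScard ▸ hs))).toOuterMeasure Y).toReal ≤
      Real.exp ε *
        ((MBIB m k n hm (ENNReal.ofReal p) (ENNReal.ofReal_le_one.mpr hp1) S'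
          (Finset.card_pos.mp (hS'card ▸ hs))).toOuterMeasure Y).toReal + δ := by
  have hμL : 32 * Real.log (2 / δ) ≤ (k + n * p) * (S.card / m) * ε ^ 2 :=
    calc 32 * Real.log (2 / δ)
        = 32 * Real.log (2 / δ) / ε ^ 2 * (m / s) * (s / m * ε ^ 2) := by field_simp
      _ ≤ (k + n * p) * (s / m * ε ^ 2) := by gcongr
      _ = (k + n * p) * (S.card / m) * ε ^ 2 := by rw [hScard]; ring
  have hlog : Real.log 2 ≤ Real.log (2 / δ) :=
    Real.log_le_log two_pos (by rw [le_div_iff₀ hδ0]; linarith)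
  have hδ : 2 * Real.exp (-((k + n * p) * (S.card / m) * ε ^ 2 / 32)) ≤ δ :=
    calc _ ≤ 2 * Real.exp (-Real.log (2 / δ)) := by gcongr; linarith
      _ = δ := by rw [Real.exp_neg, Real.exp_log (by positivity), inv_div]; field_simp
  refine ENNReal.toReal_le_mul_add_of_le ?_ (Real.exp_pos ε).le hδ0.le
    ((MBIB_toOuterMeasure_le_exp_mul_add hm k n hp0 hp1 S S' _ _ (hScard.trans hS'card.symm) hε0
      hε3 (by linarith [Real.log_two_gt_d9]) Y).trans (add_le_add le_rfl
        (ENNReal.ofReal_le_ofReal hδ)))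
  rw [PMF.toOuterMeasure_apply]
  exact PMF.tsum_coe_indicator_ne_top _ Y

theorem stmt0 (m s k n : ℕ) (hm : 0 < m) (hs : 0 < s) (hk : 0 < k) (hn : 0 < n) (hsm : s ≤ m)
    (p : ℝ) (hp0 : 0 ≤ p) (hp1 : p ≤ 1)
    (ε δ : ℝ) (hε0 : 0 < ε) (hε3 : ε ≤ 3) (hδ0 : 0 < δ) (hδ1 : δ < 1)
    (hnoise : (k : ℝ) + n * p ≥ 32 * Real.log (2 / δ) / ε ^ 2 * ((m : ℝ) / s))
    (S S' : Finset (Fin m)) (hScard : S.card = s) (hS'card : S'.card = s) (hSS' : S ≠ S')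
    (Y : Set (Multiset (Fin m))) :
    ((MBIB m k n hm (ENNReal.ofReal p) (ENNReal.ofReal_le_one.mpr hp1) S
        (Finset.card_pos.mp (hScard ▸ hs))).toOuterMeasure Y).toReal ≤
      Real.exp ε *
        ((MBIB m k n hm (ENNReal.ofReal p) (ENNReal.ofReal_le_one.mpr hp1) S'
          (Finset.card_pos.mp (hS'card ▸ hs))).toOuterMeasure Y).toReal + δ :=
  stmt0_general m s k n hm hs p hp0 hp1 ε δ hε0 hε3 hδ0 hδ1 hnoise S S' hScard hS'card Y
end

section
/- Let m, s, k, n be positive integers with s ≤ m, let p ∈ [0,1], let 0 < ε ≤ 3 and 0 < δ < 1, and assume (k + n·p)·(s/m) ≥ 32·ln(2/δ)/ε². Let X₁ and X₂ be (possibly dependent) random variables on a common probability space such that each of X₁ and X₂ is distributed as the sum of a Binomial(k, s/m) random variable and an independent Binomial(n, p·s/m) random variable. Then Pr[1 + X₁ ≥ e^ε · X₂] ≤ δ. -/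
set_option maxHeartbeats 1000000


/-- `binomProb N q j` is the probability that a `Binomial(N, q)` random variable equals `j`. -/
noncomputable def binomProb (N : ℕ) (q : ℝ) (j : ℕ) : ℝ :=
  (N.choose j : ℝ) * q ^ j * (1 - q) ^ (N - j)

/-- Probability mass function of the sum of independent `Binomial(k, q1)` and
`Binomial(n, q2)` random variables. -/
noncomputable def convProb (k n : ℕ) (q1 q2 : ℝ) (j : ℕ) : ℝ :=
  ∑ a ∈ Finset.range (j + 1), binomProb k q1 a * binomProb n q2 (j - a)

open Finset MeasureTheory

lemma binomProb_nonneg {N : ℕ} {q : ℝ} (h0 : 0 ≤ q) (h1 : q ≤ 1) (j : ℕ) :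
    0 ≤ binomProb N q j := by
  unfold binomProb
  have : (0:ℝ) ≤ 1 - q := by linarith
  positivity

lemma binomProb_eq_zero {N j : ℕ} (q : ℝ) (h : N < j) : binomProb N q j = 0 := by
  unfold binomProb
  rw [Nat.choose_eq_zero_of_lt h]; ring

lemma convProb_nonneg {k n : ℕ} {q1 q2 : ℝ} (h10 : 0 ≤ q1) (h11 : q1 ≤ 1)
    (h20 : 0 ≤ q2) (h21 : q2 ≤ 1) (j : ℕ) : 0 ≤ convProb k n q1 q2 j := by
  unfold convProb
  exact Finset.sum_nonneg fun a _ =>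
    mul_nonneg (binomProb_nonneg h10 h11 a) (binomProb_nonneg h20 h21 _)

lemma convProb_eq_zero {k n j : ℕ} (q1 q2 : ℝ) (h : k + n < j) : convProb k n q1 q2 j = 0 := by
  unfold convProb
  apply Finset.sum_eq_zero
  intro a ha
  rcases le_or_gt a k with hak | hak
  · have : n < j - a := by omega
    rw [binomProb_eq_zero _ this]; ring
  · rw [binomProb_eq_zero _ hak]; ring

/-- binomial MGF -/
lemma binom_mgf (N : ℕ) (q r : ℝ) :
    ∑ a ∈ range (N + 1), r ^ a * binomProb N q a = (1 - q + q * r) ^ N := by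
  have h := add_pow (q * r) (1 - q) N
  rw [show q * r + (1 - q) = 1 - q + q * r by ring] at h
  rw [h]
  apply Finset.sum_congr rfl
  intro a _
  unfold binomProb
  rw [mul_pow]; ring

lemma tri_swap (M : ℕ) (h : ℕ → ℕ → ℝ) :
    ∑ j ∈ range M, ∑ a ∈ range (j + 1), h j a
      = ∑ a ∈ range M, ∑ j ∈ Ico a M, h j a := by
  induction M with
  | zero => simp
  | succ M ih =>
      have h1 : ∀ a ∈ range M, ∑ j ∈ Ico a (M+1), h j a = (∑ j ∈ Ico a M, h j a) + h M a := by
        intro a ha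
        rw [Finset.sum_Ico_succ_top (le_of_lt (mem_range.mp ha))]
      have h2 : ∑ a ∈ range (M+1), ∑ j ∈ Ico a (M+1), h j a
          = (∑ a ∈ range M, ∑ j ∈ Ico a M, h j a) + ∑ a ∈ range (M+1), h M a := by
        rw [Finset.sum_range_succ, Finset.sum_congr rfl h1, Finset.sum_add_distrib,
          Nat.Ico_succ_singleton, Finset.sum_singleton, Finset.sum_range_succ]
        ring
      rw [Finset.sum_range_succ, ih, h2]

lemma conv_mgf (k n : ℕ) (q1 q2 r : ℝ) :
    ∑ j ∈ range (k + n + 1), r ^ j * convProb k n q1 q2 j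
      = (1 - q1 + q1 * r) ^ k * (1 - q2 + q2 * r) ^ n := by
  set M := k + n + 1 with hM
  set F : ℕ → ℝ := fun a => r ^ a * binomProb k q1 a with hF
  set G : ℕ → ℝ := fun b => r ^ b * binomProb n q2 b with hG
  have hFz : ∀ a, k < a → F a = 0 := fun a ha => by
    simp [hF, binomProb_eq_zero _ ha]
  have hGz : ∀ b, n < b → G b = 0 := fun b hb => by
    simp [hG, binomProb_eq_zero _ hb]
  have step1 : ∑ j ∈ range M, r ^ j * convProb k n q1 q2 j
      = ∑ j ∈ range M, ∑ a ∈ range (j + 1), F a * G (j - a) := by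
    apply Finset.sum_congr rfl
    intro j _
    unfold convProb
    rw [Finset.mul_sum]
    apply Finset.sum_congr rfl
    intro a ha
    have haj : a ≤ j := Nat.lt_succ_iff.mp (mem_range.mp ha)
    have : r ^ j = r ^ a * r ^ (j - a) := by
      rw [← pow_add]
      congr 1
      omega
    rw [this, hF, hG]
    ring
  have step2 : ∑ j ∈ range M, ∑ a ∈ range (j + 1), F a * G (j - a)
      = ∑ a ∈ range M, ∑ j ∈ Ico a M, F a * G (j - a) :=
    tri_swap M (fun j a => F a * G (j - a))
  have step3 : ∀ a ∈ range M, ∑ j ∈ Ico a M, F a * G (j - a)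
      = F a * ∑ i ∈ range (M - a), G i := by
    intro a _
    rw [Finset.sum_Ico_eq_sum_range, Finset.mul_sum]
    apply Finset.sum_congr rfl
    intro i _
    have : a + i - a = i := by omega
    rw [this]
  have SGdef : ∀ a ∈ range M, a ≤ k → ∑ i ∈ range (M - a), G i = ∑ i ∈ range (n + 1), G i := by
    intro a _ hak
    symm
    apply Finset.sum_subset
    · apply Finset.range_subset_range.mpr
      omega
    · intro i _ hi
      exact hGz i (by simp at hi; omega)
  have step4 : ∑ a ∈ range M, F a * ∑ i ∈ range (M - a), G i
      = (∑ a ∈ range (k + 1), F a) * ∑ i ∈ range (n + 1), G i := by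
    rw [Finset.sum_mul]
    rw [show ∑ a ∈ range (k+1), F a * ∑ i ∈ range (n+1), G i
        = ∑ a ∈ range M, F a * ∑ i ∈ range (n+1), G i from
      Finset.sum_subset (Finset.range_subset_range.mpr (by omega))
        (fun a _ ha => by rw [hFz a (by simp at ha; omega)]; ring)]
    apply Finset.sum_congr rfl
    intro a ha
    rcases le_or_gt a k with hak | hak
    · rw [SGdef a ha hak]
    · rw [hFz a hak]; ring
  rw [step1, step2, Finset.sum_congr rfl step3, step4, binom_mgf, binom_mgf]

lemma base_le_exp (q lam : ℝ) (hq0 : 0 ≤ q) :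
    1 - q + q * Real.exp lam ≤ Real.exp (q * (Real.exp lam - 1)) := by
  have h := Real.add_one_le_exp (q * (Real.exp lam - 1))
  linarith

lemma base_nonneg (q lam : ℝ) (hq0 : 0 ≤ q) (hq1 : q ≤ 1) :
    0 ≤ 1 - q + q * Real.exp lam := by
  nlinarith [Real.exp_pos lam, mul_nonneg hq0 (Real.exp_pos lam).le]

lemma mgf_le (k n : ℕ) (q1 q2 lam : ℝ) (h10 : 0 ≤ q1) (h11 : q1 ≤ 1)
    (h20 : 0 ≤ q2) (h21 : q2 ≤ 1) :
    (1 - q1 + q1 * Real.exp lam) ^ k * (1 - q2 + q2 * Real.exp lam) ^ n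
      ≤ Real.exp ((k * q1 + n * q2) * (Real.exp lam - 1)) := by
  have b1 := base_le_exp q1 lam h10
  have b2 := base_le_exp q2 lam h20
  have n1 := base_nonneg q1 lam h10 h11
  have n2 := base_nonneg q2 lam h20 h21
  calc (1 - q1 + q1 * Real.exp lam) ^ k * (1 - q2 + q2 * Real.exp lam) ^ n
      ≤ Real.exp (q1 * (Real.exp lam - 1)) ^ k * Real.exp (q2 * (Real.exp lam - 1)) ^ n := by
        apply mul_le_mul (pow_le_pow_left₀ n1 b1 k) (pow_le_pow_left₀ n2 b2 n)
          (pow_nonneg n2 n) (pow_nonneg (Real.exp_pos _).le k)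
    _ = Real.exp ((k * q1 + n * q2) * (Real.exp lam - 1)) := by
        rw [← Real.exp_nat_mul, ← Real.exp_nat_mul, ← Real.exp_add]
        ring_nf

lemma markov (M : ℕ) (pj : ℕ → ℝ) (hpj : ∀ j, 0 ≤ pj j) (lam c : ℝ)
    (P : ℕ → Prop) [DecidablePred P] (hP : ∀ j : ℕ, P j → 0 ≤ lam * ((j : ℝ) - c)) :
    ∑ j ∈ (range M).filter (fun j => P j), pj j
      ≤ Real.exp (-(lam * c)) * ∑ j ∈ range M, Real.exp lam ^ j * pj j := by
  have key : ∀ j : ℕ, Real.exp (-(lam*c)) * (Real.exp lam ^ j * pj j)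
      = Real.exp (lam * ((j:ℝ) - c)) * pj j := by
    intro j
    rw [← Real.exp_nat_mul, ← mul_assoc, ← Real.exp_add,
      show -(lam*c) + (j:ℝ)*lam = lam*((j:ℝ)-c) from by ring]
  rw [Finset.mul_sum]
  calc ∑ j ∈ (range M).filter (fun j => P j), pj j
      ≤ ∑ j ∈ (range M).filter (fun j => P j), Real.exp (lam * ((j:ℝ) - c)) * pj j := by
        apply Finset.sum_le_sum
        intro j hj
        have hPj : P j := (Finset.mem_filter.mp hj).2
        nlinarith [Real.one_le_exp (hP j hPj), hpj j]
    _ ≤ ∑ j ∈ range M, Real.exp (lam * ((j:ℝ) - c)) * pj j := by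
        apply Finset.sum_le_sum_of_subset_of_nonneg (Finset.filter_subset _ _)
        intro j _ _
        exact mul_nonneg (Real.exp_pos _).le (hpj j)
    _ = ∑ j ∈ range M, Real.exp (-(lam*c)) * (Real.exp lam ^ j * pj j) := by
        exact Finset.sum_congr rfl fun j _ => (key j).symm

lemma sum4 (x : ℝ) : ∑ i ∈ range 4, x ^ i / (Nat.factorial i) = 1 + x + x^2/2 + x^3/6 := by
  norm_num [Finset.sum_range_succ, Nat.factorial]

lemma sum5 (x : ℝ) : ∑ i ∈ range 5, x ^ i / (Nat.factorial i) = 1 + x + x^2/2 + x^3/6 + x^4/24 := by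
  norm_num [Finset.sum_range_succ, Nat.factorial]

lemma exp_neg_le (x : ℝ) (hx : 0 ≤ x) : Real.exp (-x) ≤ 1 - x + x^2/2 := by
  have h := Real.sum_le_exp_of_nonneg hx 4
  rw [sum4] at h
  have hpos := Real.exp_pos x
  rw [Real.exp_neg]
  rw [inv_le_iff_one_le_mul₀ hpos]
  nlinarith [pow_nonneg hx 3, pow_nonneg hx 4, pow_nonneg hx 5]

lemma exp_ge_quartic (x : ℝ) (hx : 0 ≤ x) : 1 + x + x^2/2 + x^3/6 + x^4/24 ≤ Real.exp x := by
  have h := Real.sum_le_exp_of_nonneg hx 5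
  rwa [sum5] at h

lemma exp_quarter_le (ε : ℝ) (h0 : 0 ≤ ε) (h3 : ε ≤ 3) :
    Real.exp (ε/4) ≤ 1 + ε/4 + 3*ε^2/64 := by
  have h := Real.exp_bound' (x := ε/4) (by linarith) (by linarith) (n := 2) (by norm_num)
  have hs : ∑ m ∈ Finset.range 2, (ε/4) ^ m / (Nat.factorial m) = 1 + ε/4 := by
    simp [Finset.sum_range_succ, Nat.factorial]
  rw [hs] at h
  calc Real.exp (ε/4) ≤ (1 + ε/4) + (ε/4)^2 * (2+1) / (Nat.factorial 2 * 2) := h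
    _ ≤ 1 + ε/4 + 3*ε^2/64 := by
        norm_num [Nat.factorial]
        nlinarith

lemma g2_bound (ε : ℝ) (h0 : 0 < ε) (h3 : ε ≤ 3) :
    ε^2/32 ≤ 1 - Real.exp (-(ε/4)) - (ε/4)*(1 - ε/4) := by
  have h := exp_neg_le (ε/4) (by linarith)
  nlinarith

lemma g_bound (ε : ℝ) (h0 : 0 < ε) (h3 : ε ≤ 3) :
    ε^2/32 + ε^3/88 ≤ (ε/4) * (Real.exp ε * (1 - ε/4)) - (Real.exp (ε/4) - 1) := by
  have h1 := exp_ge_quartic ε h0.le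
  have h2 := exp_quarter_le ε h0.le h3
  have hq : (0:ℝ) < 1 - ε/4 := by linarith
  have key : (ε/4) * ((1 + ε + ε^2/2 + ε^3/6 + ε^4/24) * (1 - ε/4))
      ≤ (ε/4) * (Real.exp ε * (1 - ε/4)) := by
    apply mul_le_mul_of_nonneg_left _ (by linarith)
    apply mul_le_mul_of_nonneg_right h1 hq.le
  have poly : ε^2/32 + ε^3/88 ≤
      (ε/4) * ((1 + ε + ε^2/2 + ε^3/6 + ε^4/24) * (1 - ε/4)) - (ε/4 + 3*ε^2/64) := by
    have e6 : ε^6 ≤ 9*ε^4 := by nlinarith [mul_nonneg (pow_nonneg h0.le 4) (show (0:ℝ) ≤ 9 - ε^2 by nlinarith)]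
    have e4 : ε^4 ≤ 3*ε^3 := by nlinarith [mul_nonneg (pow_nonneg h0.le 3) (show (0:ℝ) ≤ 3 - ε by linarith)]
    nlinarith [sq_nonneg ε, pow_pos h0 3]
  linarith

lemma meas_event_le {Ω : Type*} [MeasurableSpace Ω] (μ : Measure Ω)
    [IsFiniteMeasure μ] (X : Ω → ℕ) (pj : ℕ → ℝ)
    (hpj : ∀ j, (μ {ω | X ω = j}).toReal = pj j) (M : ℕ)
    (hzero : ∀ j, M ≤ j → pj j = 0) (P : ℕ → Prop) [DecidablePred P] :
    (μ {ω | P (X ω)}).toReal ≤ ∑ j ∈ (range M).filter (fun j => P j), pj j := by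
  have hne : ∀ s : Set Ω, μ s ≠ ⊤ := fun s => measure_ne_top μ s
  have hjzero : ∀ j, M ≤ j → μ {ω | X ω = j} = 0 := by
    intro j hj
    have h0 : (μ {ω | X ω = j}).toReal = 0 := by rw [hpj j, hzero j hj]
    rcases ENNReal.toReal_eq_zero_iff _ |>.mp h0 with h | h
    · exact h
    · exact absurd h (hne _)
  have hnull : μ (⋃ i : ℕ, {ω | X ω = M + i}) = 0 :=
    measure_iUnion_null fun i => hjzero (M + i) (by omega)
  have hsub : {ω | P (X ω)} ⊆
      (⋃ j ∈ (range M).filter (fun j => P j), {ω | X ω = j}) ∪ ⋃ i : ℕ, {ω | X ω = M + i} := by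
    intro ω hω
    by_cases h : X ω < M
    · left
      refine Set.mem_biUnion (Finset.mem_coe.mpr ?_) rfl
      exact Finset.mem_filter.mpr ⟨Finset.mem_range.mpr h, hω⟩
    · right
      refine Set.mem_iUnion.mpr ⟨X ω - M, ?_⟩
      simp only [Set.mem_setOf_eq]
      omega
  have hmeas : μ {ω | P (X ω)} ≤ ∑ j ∈ (range M).filter (fun j => P j), μ {ω | X ω = j} := by
    calc μ {ω | P (X ω)} ≤ μ ((⋃ j ∈ (range M).filter (fun j => P j), {ω | X ω = j})
          ∪ ⋃ i : ℕ, {ω | X ω = M + i}) := measure_mono hsub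
      _ ≤ μ (⋃ j ∈ (range M).filter (fun j => P j), {ω | X ω = j})
          + μ (⋃ i : ℕ, {ω | X ω = M + i}) := measure_union_le _ _
      _ = μ (⋃ j ∈ (range M).filter (fun j => P j), {ω | X ω = j}) := by rw [hnull, add_zero]
      _ ≤ ∑ j ∈ (range M).filter (fun j => P j), μ {ω | X ω = j} :=
          measure_biUnion_finset_le _ _
  calc (μ {ω | P (X ω)}).toReal
      ≤ (∑ j ∈ (range M).filter (fun j => P j), μ {ω | X ω = j}).toReal :=
        ENNReal.toReal_mono (by exact ENNReal.sum_ne_top.mpr fun j _ => hne _) hmeas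
    _ = ∑ j ∈ (range M).filter (fun j => P j), (μ {ω | X ω = j}).toReal := by
        exact ENNReal.toReal_sum fun j _ => hne _
    _ = ∑ j ∈ (range M).filter (fun j => P j), pj j :=
        Finset.sum_congr rfl fun j _ => hpj j

theorem stmt1 (m s k n : ℕ) (hm : 0 < m) (hs : 0 < s) (hk : 0 < k) (hn : 0 < n) (hsm : s ≤ m)
    (p : ℝ) (hp0 : 0 ≤ p) (hp1 : p ≤ 1)
    (ε δ : ℝ) (hε0 : 0 < ε) (hε3 : ε ≤ 3) (hδ0 : 0 < δ) (hδ1 : δ < 1)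
    (hnoise : ((k : ℝ) + n * p) * ((s : ℝ) / m) ≥ 32 * Real.log (2 / δ) / ε ^ 2)
    {Ω : Type*} [MeasurableSpace Ω] (μ : MeasureTheory.Measure Ω)
    [MeasureTheory.IsProbabilityMeasure μ]
    (X₁ X₂ : Ω → ℕ)
    (h1 : ∀ j : ℕ, (μ {ω | X₁ ω = j}).toReal = convProb k n ((s : ℝ) / m) (p * s / m) j)
    (h2 : ∀ j : ℕ, (μ {ω | X₂ ω = j}).toReal = convProb k n ((s : ℝ) / m) (p * s / m) j) :
    (μ {ω | (1 : ℝ) + X₁ ω ≥ Real.exp ε * X₂ ω}).toReal ≤ δ := by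
  classical
  have hm' : (0:ℝ) < m := Nat.cast_pos.mpr hm
  set q1 : ℝ := (s:ℝ)/m with hq1def
  set q2 : ℝ := p * (s:ℝ) / m with hq2def
  have hq1pos : 0 < q1 := div_pos (Nat.cast_pos.mpr hs) hm'
  have hq1le : q1 ≤ 1 := by
    rw [hq1def, div_le_one hm']
    exact_mod_cast hsm
  have hq2eq : q2 = p * q1 := by rw [hq2def, hq1def, mul_div_assoc]
  have hq2nonneg : 0 ≤ q2 := by rw [hq2eq]; exact mul_nonneg hp0 hq1pos.le
  have hq2le : q2 ≤ 1 := by rw [hq2eq]; nlinarith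
  set μ0 : ℝ := k * q1 + n * q2 with hμ0def
  have hμ0eq : μ0 = ((k:ℝ) + n*p) * q1 := by rw [hμ0def, hq2eq]; ring
  set L := Real.log (2/δ) with hLdef
  have hL : 0.6875 ≤ L := by
    have h2δ : (2:ℝ) ≤ 2/δ := by
      rw [le_div_iff₀ hδ0]; linarith
    have hlog := Real.log_le_log (by norm_num : (0:ℝ) < 2) h2δ
    have := Real.log_two_gt_d9
    rw [hLdef]
    linarith
  have hnoise2 : 32 * L ≤ μ0 * ε^2 := by
    have h := hnoise
    rw [ge_iff_le, div_le_iff₀ (by positivity : (0:ℝ) < ε^2)] at h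
    rw [hμ0eq]
    exact h
  have hμ0pos : 0 < μ0 := by
    have hk' : (0:ℝ) < k := Nat.cast_pos.mpr hk
    have : (0:ℝ) ≤ n * q2 := mul_nonneg (Nat.cast_nonneg n) hq2nonneg
    nlinarith
  set t : ℝ := (1 - ε/4) * μ0 with htdef
  set c : ℝ := Real.exp ε * t - 1 with hcdef
  set pj := convProb k n q1 q2 with hpjdef
  have hpjz : ∀ j, k + n + 1 ≤ j → pj j = 0 := fun j hj =>
    convProb_eq_zero _ _ (by omega)
  have hpjnn : ∀ j, 0 ≤ pj j := fun j =>
    convProb_nonneg hq1pos.le hq1le hq2nonneg hq2le j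
  -- generic tail bound
  have tailbound : ∀ (lam cc : ℝ) (P : ℕ → Prop) (inst : DecidablePred P),
      (∀ j : ℕ, P j → 0 ≤ lam * ((j:ℝ) - cc)) →
      ∑ j ∈ (Finset.range (k+n+1)).filter (fun j => P j), pj j
        ≤ Real.exp (μ0 * (Real.exp lam - 1) - lam * cc) := by
    intro lam cc P inst hP
    have hmk := markov (k+n+1) pj hpjnn lam cc P hP
    have hmgf : ∑ j ∈ Finset.range (k+n+1), Real.exp lam ^ j * pj j
        = (1-q1+q1*Real.exp lam)^k * (1-q2+q2*Real.exp lam)^n :=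
      conv_mgf k n q1 q2 (Real.exp lam)
    have hle := mgf_le k n q1 q2 lam hq1pos.le hq1le hq2nonneg hq2le
    calc ∑ j ∈ (Finset.range (k+n+1)).filter (fun j => P j), pj j
        ≤ Real.exp (-(lam * cc)) * ∑ j ∈ Finset.range (k+n+1), Real.exp lam ^ j * pj j := hmk
      _ ≤ Real.exp (-(lam * cc)) * Real.exp ((k * q1 + n * q2) * (Real.exp lam - 1)) := by
          rw [hmgf]
          exact mul_le_mul_of_nonneg_left hle (Real.exp_pos _).le
      _ = Real.exp (μ0 * (Real.exp lam - 1) - lam * cc) := by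
          rw [← Real.exp_add, hμ0def]
          ring_nf
  have hlogd : Real.log (δ/2) = -L := by
    rw [hLdef, show δ/2 = (2/δ)⁻¹ from by field_simp, Real.log_inv]
  -- upper tail
  have hA : (μ {ω | c ≤ ((X₁ ω : ℕ) : ℝ)}).toReal ≤ δ/2 := by
    have hm1 := meas_event_le μ X₁ pj h1 (k+n+1) hpjz (fun j : ℕ => c ≤ (j:ℝ))
    have hm2 := tailbound (ε/4) c (fun j : ℕ => c ≤ (j:ℝ)) (fun j => Classical.propDecidable _)
      (fun j hj => mul_nonneg (by linarith) (by linarith))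
    have hexp : μ0 * (Real.exp (ε/4) - 1) - (ε/4) * c ≤ Real.log (δ/2) := by
      rw [hlogd, hcdef, htdef]
      have hg := g_bound ε hε0 hε3
      have hint1 : 32 * L * ε ≤ (μ0 * ε^2) * ε :=
        mul_le_mul_of_nonneg_right hnoise2 hε0.le
      have hint2 : μ0 * (ε^2/32 + ε^3/88)
          ≤ μ0 * ((ε/4) * (Real.exp ε * (1 - ε/4)) - (Real.exp (ε/4) - 1)) :=
        mul_le_mul_of_nonneg_left hg hμ0pos.le
      have hint3 : 0.6875 * ε ≤ L * ε := mul_le_mul_of_nonneg_right hL hε0.le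
      nlinarith
    have hfin : Real.exp (μ0 * (Real.exp (ε/4) - 1) - (ε/4) * c) ≤ δ/2 := by
      calc Real.exp (μ0 * (Real.exp (ε/4) - 1) - (ε/4) * c)
          ≤ Real.exp (Real.log (δ/2)) := Real.exp_le_exp.mpr hexp
        _ = δ/2 := Real.exp_log (by linarith)
    calc (μ {ω | c ≤ ((X₁ ω : ℕ) : ℝ)}).toReal
        ≤ ∑ j ∈ (Finset.range (k+n+1)).filter (fun j : ℕ => c ≤ (j:ℝ)), pj j := hm1
      _ ≤ Real.exp (μ0 * (Real.exp (ε/4) - 1) - (ε/4) * c) := hm2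
      _ ≤ δ/2 := hfin
  -- lower tail
  have hB : (μ {ω | ((X₂ ω : ℕ) : ℝ) < t}).toReal ≤ δ/2 := by
    have hm1 := meas_event_le μ X₂ pj h2 (k+n+1) hpjz (fun j : ℕ => (j:ℝ) < t)
    have hm2 := tailbound (-(ε/4)) t (fun j : ℕ => (j:ℝ) < t) (fun j => Classical.propDecidable _)
      (fun j hj => by nlinarith [mul_nonneg (show (0:ℝ) ≤ ε/4 by linarith) (show (0:ℝ) ≤ t - (j:ℝ) by linarith)])
    have hexp : μ0 * (Real.exp (-(ε/4)) - 1) - (-(ε/4)) * t ≤ Real.log (δ/2) := by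
      rw [hlogd, htdef]
      have hg2 := g2_bound ε hε0 hε3
      have hint2 : μ0 * (ε^2/32)
          ≤ μ0 * (1 - Real.exp (-(ε/4)) - (ε/4)*(1 - ε/4)) :=
        mul_le_mul_of_nonneg_left hg2 hμ0pos.le
      nlinarith
    have hfin : Real.exp (μ0 * (Real.exp (-(ε/4)) - 1) - (-(ε/4)) * t) ≤ δ/2 := by
      calc Real.exp (μ0 * (Real.exp (-(ε/4)) - 1) - (-(ε/4)) * t)
          ≤ Real.exp (Real.log (δ/2)) := Real.exp_le_exp.mpr hexp
        _ = δ/2 := Real.exp_log (by linarith)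
    calc (μ {ω | ((X₂ ω : ℕ) : ℝ) < t}).toReal
        ≤ ∑ j ∈ (Finset.range (k+n+1)).filter (fun j : ℕ => (j:ℝ) < t), pj j := hm1
      _ ≤ Real.exp (μ0 * (Real.exp (-(ε/4)) - 1) - (-(ε/4)) * t) := hm2
      _ ≤ δ/2 := hfin
  -- event split
  have hsplit : {ω | (1 : ℝ) + X₁ ω ≥ Real.exp ε * X₂ ω}
      ⊆ {ω | c ≤ ((X₁ ω : ℕ) : ℝ)} ∪ {ω | ((X₂ ω : ℕ) : ℝ) < t} := by
    intro ω hω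
    by_cases hx : ((X₂ ω : ℕ) : ℝ) < t
    · right; exact hx
    · left
      push_neg at hx
      have hmul : Real.exp ε * t ≤ Real.exp ε * X₂ ω :=
        mul_le_mul_of_nonneg_left hx (Real.exp_pos ε).le
      simp only [Set.mem_setOf_eq, ge_iff_le] at hω ⊢
      rw [hcdef]
      linarith
  have hne : ∀ s : Set Ω, μ s ≠ ⊤ := fun s => measure_ne_top μ s
  calc (μ {ω | (1 : ℝ) + X₁ ω ≥ Real.exp ε * X₂ ω}).toReal
      ≤ (μ ({ω | c ≤ ((X₁ ω : ℕ) : ℝ)} ∪ {ω | ((X₂ ω : ℕ) : ℝ) < t})).toReal :=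
        ENNReal.toReal_mono (hne _) (measure_mono hsplit)
    _ ≤ (μ {ω | c ≤ ((X₁ ω : ℕ) : ℝ)} + μ {ω | ((X₂ ω : ℕ) : ℝ) < t}).toReal :=
        ENNReal.toReal_mono (ENNReal.add_ne_top.mpr ⟨hne _, hne _⟩) (measure_union_le _ _)
    _ = (μ {ω | c ≤ ((X₁ ω : ℕ) : ℝ)}).toReal + (μ {ω | ((X₂ ω : ℕ) : ℝ) < t}).toReal :=
        ENNReal.toReal_add (hne _) (hne _)
    _ ≤ δ/2 + δ/2 := add_le_add hA hB
    _ = δ := by ring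
end

section
/- Accuracy of the small-domain frequency-estimation protocol: let n, B be positive integers, 0 < ε ≤ 3, 0 < δ < 1, β ∈ (0,1], and set ρ = (32·ln(2/δ)/ε²)·(B/n); assume ρ ≤ 1. Let Z₁,…,Z_n be i.i.d. random variables where each Z_i equals a uniformly random element of [B] with probability ρ and equals a special symbol ⊥ otherwise. For a dataset D = (x₁,…,x_n) ∈ [B]^n, let g(j) = #{i : x_i = j} be the true frequency of j and define the estimate ĝ(j) = g(j) + #{i : Z_i = j} − n·ρ/B for each j ∈ [B]. Then Pr[ max_{j∈[B]} |ĝ(j) − g(j)| > α ] < β, where α = max{ 3·ln(2B/β), √( 3·ln(2B/β) · 32·ln(2/δ)/ε² ) }. -/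
/-!
For fixed `j` the data term `g(j)` cancels, and `#{i | Z i = j}` is a sum of `n` independent
indicators of probability `ρ / B`, with mean `m = n ρ / B = 32 log(2/δ) / ε²`. The Chernoff
bound with parameter `s = 2α / (2m + α)`, combined with `eˢ - 1 - s < s² / (2 - s)`, bounds
each of the two tails by `exp (-α² / (2m + α))`. The choice of `α` makes this at most
`β / (2B)`, and a union bound over the two tails and the `B` values of `j` gives `β`.
-/

open MeasureTheory ProbabilityTheory Real Finset

theorem Real.exp_neg_sub_one_add_le {s : ℝ} (hs : 0 ≤ s) :
    exp (-s) - 1 + s ≤ exp s - 1 - s := by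
  have := self_le_sinh_iff.mpr hs
  rw [sinh_eq] at this
  linarith

noncomputable def chernoffExponent (m α : ℝ) : ℝ := α ^ 2 / (2 * m + α)

theorem mul_exp_sub_one_sub_sub_lt_neg_chernoffExponent {m α : ℝ} (hm : 0 < m) (hα : 0 < α) :
    m * (exp (2 * α / (2 * m + α)) - 1 - 2 * α / (2 * m + α)) - 2 * α / (2 * m + α) * α
      < -chernoffExponent m α := by
  set s := 2 * α / (2 * m + α) with hs
  have h2ma : 0 < 2 * m + α := by linarith
  have hs0 : 0 < s := by positivity
  have h2s : 2 - s = 4 * m / (2 * m + α) := by rw [hs]; field_simp; ring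
  have h2s_pos : 0 < 2 - s := by rw [h2s]; positivity
  have hexp : exp s - 1 - s < s ^ 2 / (2 - s) := by
    have := exp_lt_two_add_div_two_sub hs0 (by linarith)
    rw [lt_div_iff₀ h2s_pos] at this ⊢
    nlinarith
  calc m * (exp s - 1 - s) - s * α < m * (s ^ 2 / (2 - s)) - s * α := by gcongr
    -- `m s² / (2 - s) = α² / (2m + α)` and `s α = 2α² / (2m + α)`
    _ = -chernoffExponent m α := by
      rw [h2s, hs, chernoffExponent]; field_simp; ring

theorem le_chernoffExponent_max {t m : ℝ} (ht : 0 < t) (hm : 0 ≤ m) :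
    t ≤ chernoffExponent m (max (3 * t) √(3 * t * m)) := by
  set α := max (3 * t) √(3 * t * m)
  have h3t : 3 * t ≤ α := le_max_left _ _
  have hsq : 3 * t * m ≤ α ^ 2 := by
    calc 3 * t * m = √(3 * t * m) ^ 2 := (sq_sqrt (by positivity)).symm
      _ ≤ α ^ 2 := by gcongr; exact le_max_right _ _
  rw [chernoffExponent, le_div_iff₀ (by linarith)]
  nlinarith

theorem exp_mul_indicator_one {Ω : Type*} (W : Set Ω) (t : ℝ) (ω : Ω) :
    exp (t * W.indicator 1 ω) = W.indicator (fun _ => exp t - 1) ω + 1 := by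
  by_cases hω : ω ∈ W <;> simp [hω]

namespace ProbabilityTheory

variable {Ω ι : Type*} [MeasurableSpace Ω] {μ : Measure Ω}

theorem iIndepFun.indicator_preimage {β : Type*} [MeasurableSpace β] {X : ι → Ω → β}
    (h : iIndepFun X μ) {s : Set β} (hs : MeasurableSet s) :
    iIndepFun (fun i => (X i ⁻¹' s).indicator (1 : Ω → ℝ)) μ :=
  h.comp (fun _ => s.indicator 1) fun _ => measurable_one.indicator hs

variable [IsProbabilityMeasure μ]

theorem mgf_indicator_one {W : Set Ω} (hW : MeasurableSet W) (t : ℝ) :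
    mgf (W.indicator 1) μ t = 1 + μ.real W * (exp t - 1) := by
  simp_rw [mgf, exp_mul_indicator_one]
  rw [integral_add ((integrable_const _).indicator hW)
    (integrable_const 1), integral_indicator_const _ hW]
  simp [add_comm]

variable [Fintype ι] {W : ι → Set Ω}

theorem iIndepFun.mgf_sum_indicator_one_le (hW : ∀ i, MeasurableSet (W i))
    (hind : iIndepFun (fun i => (W i).indicator (1 : Ω → ℝ)) μ) (t : ℝ) :
    mgf (∑ i, (W i).indicator 1) μ t ≤ exp ((∑ i, μ.real (W i)) * (exp t - 1)) := by
  rw [hind.mgf_sum (fun i => measurable_one.indicator (hW i)), sum_mul, exp_sum]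
  gcongr with i
  · exact fun _ _ => mgf_nonneg
  · rw [mgf_indicator_one (hW i)]
    linarith [add_one_le_exp (μ.real (W i) * (exp t - 1))]

theorem iIndepFun.integrable_exp_mul_sum_indicator_one (hW : ∀ i, MeasurableSet (W i))
    (hind : iIndepFun (fun i => (W i).indicator (1 : Ω → ℝ)) μ) (t : ℝ) :
    Integrable (fun ω => exp (t * (∑ i, (W i).indicator 1) ω)) μ :=
  hind.integrable_exp_mul_sum (fun i => measurable_one.indicator (hW i)) fun i _ => by
    simp_rw [exp_mul_indicator_one]
    exact ((integrable_const _).indicator (hW i)).add (integrable_const 1)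

theorem iIndepFun.measureReal_sum_indicator_one_ge_lt (hW : ∀ i, MeasurableSet (W i))
    (hind : iIndepFun (fun i => (W i).indicator (1 : Ω → ℝ)) μ) {m α : ℝ}
    (hm : ∑ i, μ.real (W i) = m) (hm0 : 0 < m) (hα : 0 < α) :
    μ.real {ω | m + α ≤ (∑ i, (W i).indicator 1) ω} < exp (-chernoffExponent m α) := by
  set s := 2 * α / (2 * m + α)
  have hs : 0 ≤ s := by positivity
  calc μ.real {ω | m + α ≤ (∑ i, (W i).indicator 1) ω}
      ≤ exp (-s * (m + α)) * mgf (∑ i, (W i).indicator 1) μ s :=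
        measure_ge_le_exp_mul_mgf _ hs (hind.integrable_exp_mul_sum_indicator_one hW s)
    _ ≤ exp (-s * (m + α)) * exp (m * (exp s - 1)) := by
        rw [← hm]; gcongr; exact hind.mgf_sum_indicator_one_le hW s
    _ = exp (m * (exp s - 1 - s) - s * α) := by rw [← exp_add]; ring_nf
    _ < exp (-chernoffExponent m α) :=
        exp_lt_exp.mpr (mul_exp_sub_one_sub_sub_lt_neg_chernoffExponent hm0 hα)

theorem iIndepFun.measureReal_sum_indicator_one_le_lt (hW : ∀ i, MeasurableSet (W i))
    (hind : iIndepFun (fun i => (W i).indicator (1 : Ω → ℝ)) μ) {m α : ℝ}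
    (hm : ∑ i, μ.real (W i) = m) (hm0 : 0 < m) (hα : 0 < α) :
    μ.real {ω | (∑ i, (W i).indicator 1) ω ≤ m - α} < exp (-chernoffExponent m α) := by
  set s := 2 * α / (2 * m + α)
  have hs : 0 ≤ s := by positivity
  calc μ.real {ω | (∑ i, (W i).indicator 1) ω ≤ m - α}
      ≤ exp (-(-s) * (m - α)) * mgf (∑ i, (W i).indicator 1) μ (-s) :=
        measure_le_le_exp_mul_mgf _ (neg_nonpos.mpr hs)
          (hind.integrable_exp_mul_sum_indicator_one hW (-s))
    _ ≤ exp (s * (m - α)) * exp (m * (exp (-s) - 1)) := by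
        rw [← hm, neg_neg]; gcongr; exact hind.mgf_sum_indicator_one_le hW (-s)
    _ = exp (m * (exp (-s) - 1 + s) - s * α) := by rw [← exp_add]; ring_nf
    _ ≤ exp (m * (exp s - 1 - s) - s * α) := by gcongr; exact exp_neg_sub_one_add_le hs
    _ < exp (-chernoffExponent m α) :=
        exp_lt_exp.mpr (mul_exp_sub_one_sub_sub_lt_neg_chernoffExponent hm0 hα)

theorem iIndepFun.measureReal_abs_sum_indicator_one_sub_gt_lt
    (hW : ∀ i, MeasurableSet (W i))
    (hind : iIndepFun (fun i => (W i).indicator (1 : Ω → ℝ)) μ)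
    {m α : ℝ} (hm : ∑ i, μ.real (W i) = m) (hm0 : 0 < m) (hα : 0 < α) :
    μ.real {ω | α < |(∑ i, (W i).indicator 1) ω - m|} < 2 * exp (-chernoffExponent m α) := by
  have hsub : {ω | α < |(∑ i, (W i).indicator 1) ω - m|} ⊆
      {ω | m + α ≤ (∑ i, (W i).indicator 1) ω} ∪
        {ω | (∑ i, (W i).indicator 1) ω ≤ m - α} := by
    rintro ω (hω : α < |_|)
    rcases lt_abs.mp hω with h | h
    · exact Or.inl (show m + α ≤ _ by linarith)
    · exact Or.inr (show _ ≤ m - α by linarith)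
  calc _ ≤ _ := measureReal_mono hsub (measure_ne_top _ _)
    _ ≤ _ := measureReal_union_le _ _
    _ < _ := by
      linarith [hind.measureReal_sum_indicator_one_ge_lt hW hm hm0 hα,
        hind.measureReal_sum_indicator_one_le_lt hW hm hm0 hα]

theorem iIndepFun.measureReal_abs_card_filter_eq_sub_gt_lt {β : Type*} [MeasurableSpace β]
    [MeasurableSingletonClass β] [DecidableEq β] {Z : ι → Ω → β}
    (hmeas : ∀ i, Measurable (Z i)) (hind : iIndepFun Z μ) {b : β} {m α : ℝ}
    (hm : ∑ i, μ.real {ω | Z i ω = b} = m) (hm0 : 0 < m) (hα : 0 < α) :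
    μ.real {ω | α < |(#{i | Z i ω = b} : ℝ) - m|} < 2 * exp (-chernoffExponent m α) := by
  have hcount : ∀ ω, (#{i | Z i ω = b} : ℝ) = (∑ i, {ω | Z i ω = b}.indicator 1) ω := by
    intro ω
    rw [natCast_card_filter, Finset.sum_apply]
    exact sum_congr rfl fun i _ => by by_cases h : Z i ω = b <;> simp [h]
  simp_rw [hcount]
  exact (hind.indicator_preimage (measurableSet_singleton b)
    ).measureReal_abs_sum_indicator_one_sub_gt_lt (fun i => hmeas i (measurableSet_singleton b))
      hm hm0 hα

end ProbabilityTheory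

theorem stmt10_general (n B : ℕ) (hn : 0 < n) (hB : 0 < B)
    (ε δ β : ℝ) (hε0 : 0 < ε) (hδ0 : 0 < δ) (hδ1 : δ < 1)
    (hβ0 : 0 < β) (hβ1 : β ≤ 1)
    (ρ : ℝ) (hρ : ρ = 32 * Real.log (2 / δ) / ε ^ 2 * ((B : ℝ) / n))
    {Ω : Type*} [MeasurableSpace Ω] (μ : Measure Ω) [IsProbabilityMeasure μ]
    (Z : Fin n → Ω → ℕ) (hmeas : ∀ i, Measurable (Z i))
    (hindep : iIndepFun Z μ)
    (hlawj : ∀ i, ∀ j ∈ Finset.Icc 1 B, μ {ω | Z i ω = j} = ENNReal.ofReal (ρ / B))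
    (D : Fin n → ℕ) :
    (μ {ω | ∃ j ∈ Finset.Icc 1 B,
        |((((Finset.univ.filter fun i => D i = j).card : ℝ) +
            ((Finset.univ.filter fun i => Z i ω = j).card : ℝ) - n * ρ / B) -
          ((Finset.univ.filter fun i => D i = j).card : ℝ))| >
        max (3 * Real.log (2 * B / β))
          (Real.sqrt (3 * Real.log (2 * B / β) * (32 * Real.log (2 / δ) / ε ^ 2)))}).toReal
      < β := by
  set c := 32 * Real.log (2 / δ) / ε ^ 2
  set t := Real.log (2 * B / β)
  set α := max (3 * t) √(3 * t * c)
  have hlogδ : 0 < Real.log (2 / δ) := log_pos (by rw [lt_div_iff₀ hδ0]; linarith)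
  have hc : 0 < c := by positivity
  have hB1 : (1 : ℝ) ≤ B := Nat.one_le_cast.mpr hB
  have ht : 0 < t := log_pos (by rw [lt_div_iff₀ hβ0]; linarith)
  have hmean : n * ρ / B = c := by rw [hρ]; field_simp
  have hlaw : ∀ j ∈ Icc 1 B, ∑ i, μ.real {ω | Z i ω = j} = c := fun j hj => by
    simp only [measureReal_def, hlawj _ j hj, sum_const, card_univ, Fintype.card_fin,
      nsmul_eq_mul]
    rw [ENNReal.toReal_ofReal (by rw [hρ]; positivity), ← hmean, mul_div_assoc]
  have htail : ∀ j ∈ Icc 1 B, μ.real {ω | α < |(#{i | Z i ω = j} : ℝ) - c|} < β / B :=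
    fun j hj => calc
      _ < 2 * exp (-chernoffExponent c α) :=
        hindep.measureReal_abs_card_filter_eq_sub_gt_lt hmeas (hlaw j hj) hc
          (lt_max_of_lt_left (by positivity))
      _ ≤ 2 * exp (-t) := by gcongr; exact le_chernoffExponent_max ht hc.le
      _ = β / B := by rw [exp_neg, exp_log (by positivity)]; field_simp
  have hcancel : ∀ g N : ℝ, g + N - n * ρ / B - g = N - c := fun g N => by rw [hmean]; ring
  simp_rw [hcancel, gt_iff_lt, ← measureReal_def]
  calc μ.real _ ≤ μ.real (⋃ j ∈ Icc 1 B, {ω | α < |(#{i | Z i ω = j} : ℝ) - c|}) :=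
        measureReal_mono (by rintro ω ⟨j, hj, h⟩; exact Set.mem_biUnion hj h)
          (measure_ne_top _ _)
    _ ≤ ∑ j ∈ Icc 1 B, _ := measureReal_biUnion_finset_le _ _
    _ < ∑ _j ∈ Icc 1 B, β / B := sum_lt_sum_of_nonempty (nonempty_Icc.mpr hB) htail
    _ = β := by rw [sum_const, Nat.card_Icc, add_tsub_cancel_right, nsmul_eq_mul]; field_simp

/-- Accuracy of the small-domain frequency-estimation protocol.  The domain `[B]`
is `{1, …, B} ⊆ ℕ`; the noise variable `Z i` equals `0` (representing the special
symbol `⊥`) with probability `1 - ρ` and each element of `[B]` with probability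
`ρ / B`. -/
theorem stmt10 (n B : ℕ) (hn : 0 < n) (hB : 0 < B)
    (ε δ β : ℝ) (hε0 : 0 < ε) (hε3 : ε ≤ 3) (hδ0 : 0 < δ) (hδ1 : δ < 1)
    (hβ0 : 0 < β) (hβ1 : β ≤ 1)
    (ρ : ℝ) (hρ : ρ = 32 * Real.log (2 / δ) / ε ^ 2 * ((B : ℝ) / n)) (hρ1 : ρ ≤ 1)
    {Ω : Type*} [MeasurableSpace Ω] (μ : Measure Ω) [IsProbabilityMeasure μ]
    (Z : Fin n → Ω → ℕ) (hmeas : ∀ i, Measurable (Z i))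
    (hindep : iIndepFun Z μ)
    (hlaw0 : ∀ i, μ {ω | Z i ω = 0} = ENNReal.ofReal (1 - ρ))
    (hlawj : ∀ i, ∀ j ∈ Finset.Icc 1 B, μ {ω | Z i ω = j} = ENNReal.ofReal (ρ / B))
    (D : Fin n → ℕ) (hD : ∀ i, D i ∈ Finset.Icc 1 B) :
    (μ {ω | ∃ j ∈ Finset.Icc 1 B,
        |((((Finset.univ.filter fun i => D i = j).card : ℝ) +
            ((Finset.univ.filter fun i => Z i ω = j).card : ℝ) - n * ρ / B) -
          ((Finset.univ.filter fun i => D i = j).card : ℝ))| >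
        max (3 * Real.log (2 * B / β))
          (Real.sqrt (3 * Real.log (2 * B / β) * (32 * Real.log (2 / δ) / ε ^ 2)))}).toReal
      < β :=
  stmt10_general n B hn hB ε δ β hε0 hδ0 hδ1 hβ0 hβ1 ρ hρ μ Z hmeas hindep hlawj D
end

section
/- Uniform collision probability of the hash family: let q be a prime and b an integer with 2 ≤ b ≤ q. For u chosen uniformly from {1,…,q−1} and v chosen uniformly from {0,…,q−1}, independently, define h_{u,v}(x) = ((u·x + v) mod q) mod b. Then for any two elements x, y with x ≢ y (mod q), Pr[h_{u,v}(x) = h_{u,v}(y)] = ⌊q/b⌋ · ((q mod b) + q − b) / (q·(q−1)); in particular this probability is the same for every such pair x, y. -/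
/-- The hash function `h_{u,v}(x) = ((u·x + v) mod q) mod b`. -/
def hashF (q b u v x : ℕ) : ℕ := ((u * x + v) % q) % b

/-!
Since `q` is prime and `x ≢ y (mod q)`, the map `(u, v) ↦ (u x + v, u y + v)` is an affine
bijection of `(ℤ/q)²`, and its image `(a, c)` has `a ≠ c` exactly when `u ≠ 0`. Hence the pairs
`(u, v)` on which `h_{u,v}` collides at `x, y` correspond to the ordered pairs `a ≠ c` in `[0, q)`
with `a ≡ c (mod b)`. Writing `q = b m + s`, the residue classes mod `b` in `[0, q)` are `s`
classes of size `m + 1` and `b - s` of size `m`, giving `b m² + (2m + 1) s - q = m (s + q - b)`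
such pairs, out of `q (q - 1)` choices of `(u, v)`.
-/

open Finset

lemma eq_and_eq_of_affine_eq_affine {R : Type*} [CommRing R] [NoZeroDivisors R] {x y : R}
    (hxy : x ≠ y) {u v u' v' : R} (hx : u * x + v = u' * x + v') (hy : u * y + v = u' * y + v') :
    u = u' ∧ v = v' := by
  have hu : u = u' := by
    have h : (u - u') * (x - y) = 0 := by linear_combination hx - hy
    simpa [sub_eq_zero, hxy] using h
  subst hu
  exact ⟨rfl, add_left_cancel hx⟩

section AffinePairMod

variable {q x y : ℕ}

def affinePairMod (q x y : ℕ) (uv : ℕ × ℕ) : ℕ × ℕ :=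
  ((uv.1 * x + uv.2) % q, (uv.1 * y + uv.2) % q)

lemma affinePairMod_injOn (hq : q.Prime) (hxy : x % q ≠ y % q) :
    Set.InjOn (affinePairMod q x y) (range q ×ˢ range q : Finset (ℕ × ℕ)) := by
  rintro ⟨u, v⟩ huv ⟨u', v'⟩ huv' h
  simp only [coe_product, coe_range, Set.mem_prod, Set.mem_Iio] at huv huv'
  simp only [affinePairMod, Prod.mk.injEq, ← ZMod.natCast_eq_natCast_iff'] at h
  push_cast at h
  have : Fact q.Prime := ⟨hq⟩
  have hxy' : (x : ZMod q) ≠ y := by rwa [Ne, ZMod.natCast_eq_natCast_iff']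
  obtain ⟨hu, hv⟩ := eq_and_eq_of_affine_eq_affine hxy' h.1 h.2
  rw [ZMod.natCast_eq_natCast_iff', Nat.mod_eq_of_lt huv.1, Nat.mod_eq_of_lt huv'.1] at hu
  rw [ZMod.natCast_eq_natCast_iff', Nat.mod_eq_of_lt huv.2, Nat.mod_eq_of_lt huv'.2] at hv
  rw [hu, hv]

lemma affinePairMod_injOn_Icc (hq : q.Prime) (hxy : x % q ≠ y % q) :
    Set.InjOn (affinePairMod q x y) (Icc 1 (q - 1) ×ˢ range q : Finset (ℕ × ℕ)) :=
  (affinePairMod_injOn hq hxy).mono <| coe_subset.2 <| product_subset_product_left fun u hu ↦ by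
    simp only [mem_Icc, mem_range] at hu ⊢
    omega

lemma affinePairMod_mem_offDiag (hq : q.Prime) (hxy : x % q ≠ y % q) {uv : ℕ × ℕ}
    (huv : uv ∈ Icc 1 (q - 1) ×ˢ range q) : affinePairMod q x y uv ∈ (range q).offDiag := by
  have : Fact q.Prime := ⟨hq⟩
  simp only [mem_product, mem_Icc] at huv
  simp only [affinePairMod, mem_offDiag, mem_range, Nat.mod_lt _ hq.pos, true_and, ne_eq,
    ← ZMod.natCast_eq_natCast_iff']
  push_cast
  intro h
  have hu : (uv.1 : ZMod q) ≠ 0 := by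
    rw [ne_eq, ZMod.natCast_eq_zero_iff]
    exact Nat.not_dvd_of_pos_of_lt (by omega) (by omega)
  rw [ne_eq, ← ZMod.natCast_eq_natCast_iff'] at hxy
  exact hxy (mul_left_cancel₀ hu (add_right_cancel h))

lemma image_affinePairMod (hq : q.Prime) (hxy : x % q ≠ y % q) :
    (Icc 1 (q - 1) ×ˢ range q).image (affinePairMod q x y) = (range q).offDiag := by
  refine eq_of_subset_of_card_le ?_ ?_
  · simpa only [image_subset_iff] using fun _ ↦ affinePairMod_mem_offDiag hq hxy
  · rw [card_image_of_injOn (affinePairMod_injOn_Icc hq hxy), offDiag_card, card_product,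
      Nat.card_Icc, card_range, Nat.add_sub_cancel, Nat.sub_mul, one_mul]

end AffinePairMod

lemma card_hashF_collisions {q b x y : ℕ} (hq : q.Prime) (hxy : x % q ≠ y % q) :
    #{uv ∈ Icc 1 (q - 1) ×ˢ range q | hashF q b uv.1 uv.2 x = hashF q b uv.1 uv.2 y} =
      #{p ∈ (range q).offDiag | p.1 % b = p.2 % b} := by
  rw [← image_affinePairMod hq hxy, filter_image,
    card_image_of_injOn ((affinePairMod_injOn_Icc hq hxy).mono (coe_subset.2 (filter_subset _ _)))]
  rfl

lemma card_filter_range_mod_eq {q b r : ℕ} (hrb : r < b) :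
    #{c ∈ range q | c % b = r} = q / b + if r < q % b then 1 else 0 := by
  rw [← Nat.count_eq_card_filter_range, ← Nat.mod_eq_of_lt hrb]
  exact Nat.count_modEq_card q (by omega) r

lemma card_filter_range_product_mod_eq {q b : ℕ} (hb : 0 < b) :
    #{p ∈ range q ×ˢ range q | p.1 % b = p.2 % b} =
      b * (q / b) ^ 2 + (2 * (q / b) + 1) * (q % b) := by
  rw [card_eq_sum_card_fiberwise (f := fun p ↦ p.1 % b) (t := range b)
    (fun p _ ↦ mem_range.2 (Nat.mod_lt _ hb))]
  have hfiber (r : ℕ) (hr : r ∈ range b) :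
      #{p ∈ {p ∈ range q ×ˢ range q | p.1 % b = p.2 % b} | p.1 % b = r} =
        (q / b) ^ 2 + (2 * (q / b) + 1) * if r < q % b then 1 else 0 := by
    have hprod : {p ∈ {p ∈ range q ×ˢ range q | p.1 % b = p.2 % b} | p.1 % b = r} =
        {c ∈ range q | c % b = r} ×ˢ {c ∈ range q | c % b = r} := by
      rw [filter_filter, ← filter_product]
      exact filter_congr fun p _ ↦ by omega
    rw [hprod, card_product, card_filter_range_mod_eq (mem_range.1 hr)]
    split_ifs <;> ring
  have hs : {r ∈ range b | r < q % b} = range (q % b) := by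
    ext r
    simp only [mem_filter, mem_range]
    have := Nat.mod_lt q hb
    omega
  rw [sum_congr rfl hfiber, sum_add_distrib, sum_const, card_range, smul_eq_mul, ← mul_sum,
    sum_boole, Nat.cast_id, hs, card_range]

lemma card_filter_offDiag_range_add {q : ℕ} (P : ℕ × ℕ → Prop) [DecidablePred P]
    (hP : ∀ a, P (a, a)) :
    #{p ∈ (range q).offDiag | P p} + q = #{p ∈ range q ×ˢ range q | P p} := by
  have hdiag : {p ∈ (range q).diag | P p} = (range q).diag := by
    refine filter_true_of_mem fun p hp ↦ ?_
    obtain ⟨a, b⟩ := p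
    obtain ⟨-, hab : a = b⟩ := mem_diag.1 hp
    exact hab ▸ hP a
  rw [← diag_union_offDiag, filter_union, card_union_of_disjoint
    (disjoint_filter_filter (disjoint_diag_offDiag _)), hdiag, diag_card, card_range, add_comm]

lemma card_filter_offDiag_range_mod_eq {q b : ℕ} (hb : 0 < b) :
    #{p ∈ (range q).offDiag | p.1 % b = p.2 % b} = q / b * (q % b + q - b) := by
  have h := card_filter_offDiag_range_add (q := q) (fun p ↦ p.1 % b = p.2 % b) fun _ ↦ rfl
  rw [card_filter_range_product_mod_eq hb] at h
  have hq := Nat.div_add_mod q b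
  rcases Nat.eq_zero_or_pos (q / b) with hm | hm
  · simp only [hm] at h hq ⊢
    omega
  · have hbq : b ≤ q % b + q := le_add_left ((Nat.one_le_div_iff hb).1 hm)
    zify [hbq] at h hq ⊢
    linear_combination h + ((q : ℤ) / b + 1) * hq

theorem stmt12 (q b : ℕ) (hq : q.Prime) (hb2 : 2 ≤ b) (hbq : b ≤ q)
    (x y : ℕ) (hxy : x % q ≠ y % q) :
    ((PMF.uniformOfFinset (Finset.Icc 1 (q - 1) ×ˢ Finset.range q)
        (Finset.Nonempty.product ⟨1, by simp; omega⟩ ⟨0, by simp [hq.pos]⟩)).toOuterMeasure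
      {uv | hashF q b uv.1 uv.2 x = hashF q b uv.1 uv.2 y}).toReal =
    ((q / b : ℕ) : ℝ) * (((q % b : ℕ) : ℝ) + (q : ℝ) - (b : ℝ)) / ((q : ℝ) * ((q : ℝ) - 1)) := by
  rw [PMF.toOuterMeasure_uniformOfFinset_apply]
  simp only [Set.mem_ofPred_eq]
  rw [card_hashF_collisions hq hxy, card_filter_offDiag_range_mod_eq (by omega), card_product,
    Nat.card_Icc, card_range, Nat.add_sub_cancel, ENNReal.toReal_div, ENNReal.toReal_natCast,
    ENNReal.toReal_natCast]
  push_cast [Nat.cast_sub (le_add_left hbq : b ≤ q % b + q), Nat.cast_sub hq.one_le]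
  ring
end

section
/- The collision probability of the hash family is strictly less than 1/b: for any prime q and integer b with 2 ≤ b < q, one has ⌊q/b⌋ · ((q mod b) + q − b) / (q·(q−1)) < 1/b. -/
theorem stmt13 (q b : ℕ) (hq : q.Prime) (hb2 : 2 ≤ b) (hbq : b < q) :
    ((q / b : ℕ) : ℝ) * (((q % b : ℕ) : ℝ) + (q : ℝ) - (b : ℝ)) / ((q : ℝ) * ((q : ℝ) - 1))
      < 1 / (b : ℝ) := by
  have hb0 : 0 < b := by omega
  have hqe : b * (q / b) + q % b = q := Nat.div_add_mod q b
  have hk1 : 1 ≤ q / b := Nat.one_le_div_iff hb0 |>.mpr (le_of_lt hbq)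
  have hr : q % b < b := Nat.mod_lt _ hb0
  have hq3 : 3 ≤ q := by omega
  have hqe' : (b : ℝ) * ((q / b : ℕ) : ℝ) + ((q % b : ℕ) : ℝ) = (q : ℝ) := by
    exact_mod_cast congrArg (Nat.cast : ℕ → ℝ) hqe
  have hk1' : (1 : ℝ) ≤ ((q / b : ℕ) : ℝ) := by exact_mod_cast hk1
  have hr' : ((q % b : ℕ) : ℝ) < (b : ℝ) := by exact_mod_cast hr
  have hr0 : (0 : ℝ) ≤ ((q % b : ℕ) : ℝ) := Nat.cast_nonneg _
  have hb2' : (2 : ℝ) ≤ (b : ℝ) := by exact_mod_cast hb2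
  have hq3' : (3 : ℝ) ≤ (q : ℝ) := by exact_mod_cast hq3
  have hbq' : (b : ℝ) < (q : ℝ) := by exact_mod_cast hbq
  have hden : (0 : ℝ) < (q : ℝ) * ((q : ℝ) - 1) := by nlinarith
  rw [div_lt_div_iff₀ hden (by positivity : (0:ℝ) < (b:ℝ))]
  nlinarith [mul_nonneg (sub_pos.mpr hbq').le (sub_nonneg.mpr hk1'), sq_nonneg (((q % b : ℕ) : ℝ) - 1), mul_nonneg hr0 (sub_nonneg.mpr hb2')]
end

section
/- Characterization of the preimage of a hash value: let q be a prime, b an integer with 2 ≤ b ≤ q, u an integer with 1 ≤ u ≤ q−1, v an integer with 0 ≤ v ≤ q−1, and w an integer with 0 ≤ w < b. Then the set { x ∈ {0,1,…,q−1} : ((u·x + v) mod q) mod b = w } equals { u^{−1}·(w + i·b − v) mod q : i ∈ {0, 1, …, ⌊(q−1−w)/b⌋} }, where u^{−1} is the multiplicative inverse of u modulo q; in particular, this set has exactly ⌊(q−1−w)/b⌋ + 1 elements. -/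
/-!
The map `x ↦ (u x + v) mod q` is a bijection of `{0, …, q - 1}` whose inverse is
`y ↦ u⁻¹ (y - v)` computed in `ZMod q`. Hence the preimage of `w` under the hash is the image
under this inverse of the residues `y < q` with `y mod b = w`, which are exactly
`w + i b` for `0 ≤ i ≤ ⌊(q - 1 - w) / b⌋`.
-/

theorem Nat.add_mul_lt_of_le_div {q b w i : ℕ} (hwq : w < q) (hi : i ≤ (q - 1 - w) / b) :
    w + i * b < q := by
  have := (Nat.mul_le_mul_right b hi).trans (Nat.div_mul_le_self (q - 1 - w) b)
  omega

theorem Nat.lt_and_mod_eq_iff_exists_eq_add_mul {q b w y : ℕ} (hw : w < b) (hwq : w < q) :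
    y < q ∧ y % b = w ↔ ∃ i ≤ (q - 1 - w) / b, y = w + i * b := by
  constructor
  · rintro ⟨hy, rfl⟩
    refine ⟨y / b, ?_, (Nat.mod_add_div' y b).symm⟩
    rw [Nat.le_div_iff_mul_le (by omega)]
    have := Nat.mod_add_div' y b
    omega
  · rintro ⟨i, hi, rfl⟩
    refine ⟨Nat.add_mul_lt_of_le_div hwq hi, ?_⟩
    rw [Nat.add_mul_mod_self_right, Nat.mod_eq_of_lt hw]

theorem Set.ncard_setOf_exists_le_eq {α : Type*} {f : ℕ → α} {N : ℕ}
    (hf : Set.InjOn f (Set.Iic N)) : {x | ∃ i ≤ N, x = f i}.ncard = N + 1 := by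
  have : {x | ∃ i ≤ N, x = f i} = f '' Set.Iic N := by
    ext x
    simp only [Set.mem_ofPred_eq, Set.mem_image, Set.mem_Iic, eq_comm]
  rw [this, hf.ncard_image, ← Finset.coe_Iic, Set.ncard_coe_finset, Nat.card_Iic]

namespace ZMod

variable {q : ℕ} [Fact q.Prime] {u : ℕ} (hu : (u : ZMod q) ≠ 0) (v : ℕ)
include hu

theorem lt_and_mul_add_mod_eq_iff {x y : ℕ} (hy : y < q) :
    x < q ∧ (u * x + v) % q = y ↔ x = ((u : ZMod q)⁻¹ * ((y : ZMod q) - v)).val := by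
  have hcast : (u * x + v) % q = y ↔ (x : ZMod q) = (u : ZMod q)⁻¹ * ((y : ZMod q) - v) := by
    rw [eq_inv_mul_iff_mul_eq₀ hu, eq_sub_iff_add_eq, ← Nat.mod_eq_of_lt hy,
      ← natCast_eq_natCast_iff', Nat.cast_add, Nat.cast_mul, natCast_mod]
  constructor
  · rintro ⟨hx, h⟩
    rw [← hcast.mp h, val_natCast_of_lt hx]
  · rintro rfl
    exact ⟨val_lt _, hcast.mpr (natCast_zmod_val _)⟩

variable {b w : ℕ} (hw : w < b) (hwq : w < q)
include hw hwq

theorem setOf_lt_and_mul_add_mod_mod_eq :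
    {x : ℕ | x < q ∧ (u * x + v) % q % b = w} =
      {x | ∃ i ≤ (q - 1 - w) / b,
        x = ((u : ZMod q)⁻¹ * (((w + i * b : ℕ) : ZMod q) - v)).val} := by
  ext x
  calc x < q ∧ (u * x + v) % q % b = w
      ↔ x < q ∧ ∃ i ≤ (q - 1 - w) / b, (u * x + v) % q = w + i * b :=
        and_congr_right fun _ => by
          rw [← Nat.lt_and_mod_eq_iff_exists_eq_add_mul hw hwq,
            and_iff_right (Nat.mod_lt _ (Fact.out : q.Prime).pos)]
    _ ↔ ∃ i ≤ (q - 1 - w) / b, x < q ∧ (u * x + v) % q = w + i * b := by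
        simp only [exists_and_left, and_left_comm]
    _ ↔ _ := exists_congr fun i => and_congr_right fun hi =>
        lt_and_mul_add_mod_eq_iff hu v (Nat.add_mul_lt_of_le_div hwq hi)

theorem ncard_setOf_lt_and_mul_add_mod_mod_eq :
    {x : ℕ | x < q ∧ (u * x + v) % q % b = w}.ncard = (q - 1 - w) / b + 1 := by
  rw [setOf_lt_and_mul_add_mod_mod_eq hu v hw hwq]
  refine Set.ncard_setOf_exists_le_eq fun i hi j hj hij => ?_
  have hmod := ((lt_and_mul_add_mod_eq_iff hu v (Nat.add_mul_lt_of_le_div hwq hi)).mpr rfl).2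
  rw [((lt_and_mul_add_mod_eq_iff hu v (Nat.add_mul_lt_of_le_div hwq hj)).mpr hij).2] at hmod
  exact Nat.eq_of_mul_eq_mul_right (by omega) (Nat.add_left_cancel hmod.symm)

end ZMod

theorem stmt14_general (q b u v w : ℕ) (hq : q.Prime) (hbq : b ≤ q)
    (hu1 : 1 ≤ u) (huq : u ≤ q - 1) (hw : w < b) :
    {x : ℕ | x < q ∧ ((u * x + v) % q) % b = w} =
      {x : ℕ | ∃ i ≤ (q - 1 - w) / b,
        x = (((u : ZMod q))⁻¹ * ((w : ZMod q) + (i : ZMod q) * (b : ZMod q) - (v : ZMod q))).val} ∧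
    {x : ℕ | x < q ∧ ((u * x + v) % q) % b = w}.ncard = (q - 1 - w) / b + 1 := by
  have : Fact q.Prime := ⟨hq⟩
  have hu : (u : ZMod q) ≠ 0 := by
    rw [Ne, ZMod.natCast_eq_zero_iff]
    exact fun h => absurd (Nat.le_of_dvd (by omega) h) (by omega)
  have hwq : w < q := by omega
  refine ⟨?_, ZMod.ncard_setOf_lt_and_mul_add_mod_mod_eq hu v hw hwq⟩
  simpa only [Nat.cast_add, Nat.cast_mul] using ZMod.setOf_lt_and_mul_add_mod_mod_eq hu v hw hwq

theorem stmt14 (q b u v w : ℕ) (hq : q.Prime) (hb2 : 2 ≤ b) (hbq : b ≤ q)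
    (hu1 : 1 ≤ u) (huq : u ≤ q - 1) (hv : v ≤ q - 1) (hw : w < b) :
    {x : ℕ | x < q ∧ ((u * x + v) % q) % b = w} =
      {x : ℕ | ∃ i ≤ (q - 1 - w) / b,
        x = (((u : ZMod q))⁻¹ * ((w : ZMod q) + (i : ZMod q) * (b : ZMod q) - (v : ZMod q))).val} ∧
    {x : ℕ | x < q ∧ ((u * x + v) % q) % b = w}.ncard = (q - 1 - w) / b + 1 :=
  stmt14_general q b u v w hq hbq hu1 huq hw
end
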